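/- arXiv:1407.3449 — 6 statements merged into one kernel-verified Lean document; each statement's English description precedes it below -/
import Mathlib

section
/- Let p>1, q∈ℝ, and let F∈C²([0,T)) be positive and satisfy F''(t) ≥ K₁(t+R)^{-q} F(t)^p for all t∈[T₁,T), for some K₁,R>0 and T₁∈[0,T). If additionally F(t) ≥ K₀(t+R)^a for all t∈[T₀,T) for some a≥1 with a > (q-2)/(p-1) and some K₀>0, T₀∈[0,T), then T < ∞. -/
/-!
After shifting time so that the weight is `t ^ (-q)` and raising `q` to `max q 0`, the weight is
decreasing. Since `F'' ≥ 0` and `F → ∞`, `F'` is eventually nonnegative. Multiply the inequality by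
`F'` and freeze the weight at its value at `2x`. This gives the energy bound
`F'² ≳ (2x)^(-q) F^(p+1)` on `[x, 2x]`, that is `F' ≥ κ F^s` with `s = (p+1)/2 > 1` and
`κ ~ x^(-q/2)`. Then `F^(1-s)` decreases at rate at least `κ (s-1)`, so
`κ (s-1) x ≤ F(x)^(1-s) ≤ (K₀ x^a)^(1-s)`. This fails for large `x` because `a (p-1) > q - 2`.
-/

open Set Filter Real

theorem Convex.monotoneOn_of_hasDerivAt_nonneg {s : Set ℝ} (hs : Convex ℝ s) {f f' : ℝ → ℝ}
    (hf : ∀ x ∈ s, HasDerivAt f (f' x) x) (hf' : ∀ x ∈ s, 0 ≤ f' x) : MonotoneOn f s :=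
  monotoneOn_of_hasDerivWithinAt_nonneg hs (fun x hx => (hf x hx).continuousAt.continuousWithinAt)
    (fun x hx => (hf x (interior_subset hx)).hasDerivWithinAt)
    (fun x hx => hf' x (interior_subset hx))

theorem Convex.antitoneOn_of_hasDerivAt_nonpos {s : Set ℝ} (hs : Convex ℝ s) {f f' : ℝ → ℝ}
    (hf : ∀ x ∈ s, HasDerivAt f (f' x) x) (hf' : ∀ x ∈ s, f' x ≤ 0) : AntitoneOn f s :=
  antitoneOn_of_hasDerivWithinAt_nonpos hs (fun x hx => (hf x hx).continuousAt.continuousWithinAt)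
    (fun x hx => (hf x (interior_subset hx)).hasDerivWithinAt)
    (fun x hx => hf' x (interior_subset hx))

theorem exists_forall_Ici_nonneg_of_tendsto_atTop {F F' : ℝ → ℝ} {T : ℝ}
    (hF : ∀ t ∈ Ici T, HasDerivAt F (F' t) t) (hF' : MonotoneOn F' (Ici T))
    (hlim : Tendsto F atTop atTop) : ∃ T' ∈ Ici T, ∀ t ∈ Ici T', 0 ≤ F' t := by
  obtain ⟨T', hT', hF'T'⟩ : ∃ T' ∈ Ici T, 0 ≤ F' T' := by
    by_contra! hneg
    have hanti := (convex_Ici T).antitoneOn_of_hasDerivAt_nonpos hF fun t ht => (hneg t ht).le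
    obtain ⟨t, hFt, hTt⟩ := ((hlim.eventually_gt_atTop (F T)).and (eventually_ge_atTop T)).exists
    exact (hanti self_mem_Ici hTt hTt).not_gt hFt
  exact ⟨T', hT', fun t ht => hF'T'.trans (hF' hT' (mem_Ici.2 (le_trans hT' ht)) ht)⟩

theorem monotoneOn_sq_sub_rpow_of_mul_rpow_le {F F' F'' : ℝ → ℝ} {s : Set ℝ} {k p : ℝ}
    (hs : Convex ℝ s) (hp : p + 1 ≠ 0)
    (hF : ∀ t ∈ s, HasDerivAt F (F' t) t) (hF' : ∀ t ∈ s, HasDerivAt F' (F'' t) t)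
    (hpos : ∀ t ∈ s, 0 < F t) (hF'nonneg : ∀ t ∈ s, 0 ≤ F' t)
    (hineq : ∀ t ∈ s, k * F t ^ p ≤ F'' t) :
    MonotoneOn (fun t => F' t ^ 2 - 2 * k / (p + 1) * F t ^ (p + 1)) s := by
  refine hs.monotoneOn_of_hasDerivAt_nonneg (f' := fun t => 2 * F' t * (F'' t - k * F t ^ p))
    (fun t ht => ?_) fun t ht => mul_nonneg (mul_nonneg zero_le_two (hF'nonneg t ht))
      (sub_nonneg.2 (hineq t ht))
  have hpow := ((hF t ht).rpow_const (p := p + 1) (Or.inl (hpos t ht).ne')).const_mul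
    (2 * k / (p + 1))
  refine (((hF' t ht).pow 2).sub hpow).congr_deriv ?_
  rw [add_sub_cancel_right]
  field_simp
  ring

theorem mul_sub_le_rpow_of_mul_rpow_le_deriv {F F' : ℝ → ℝ} {κ s a b : ℝ} (hs : 1 < s)
    (hab : a ≤ b) (hF : ∀ t ∈ Icc a b, HasDerivAt F (F' t) t) (hpos : ∀ t ∈ Icc a b, 0 < F t)
    (hineq : ∀ t ∈ Icc a b, κ * F t ^ s ≤ F' t) :
    κ * (s - 1) * (b - a) ≤ F a ^ (1 - s) := by
  have hanti : AntitoneOn (fun t => F t ^ (1 - s) + κ * (s - 1) * t) (Icc a b) := by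
    refine (convex_Icc a b).antitoneOn_of_hasDerivAt_nonpos
      (f' := fun t => (s - 1) * (κ - F t ^ (-s) * F' t)) (fun t ht => ?_) fun t ht => ?_
    · refine (((hF t ht).rpow_const (p := 1 - s) (Or.inl (hpos t ht).ne')).add
        ((hasDerivAt_id t).const_mul (κ * (s - 1)))).congr_deriv ?_
      rw [sub_sub_cancel_left]
      ring
    · have hFs : F t ^ (-s) * F t ^ s = 1 := by
        rw [← rpow_add (hpos t ht), neg_add_cancel, rpow_zero]
      refine mul_nonpos_of_nonneg_of_nonpos (by linarith) (sub_nonpos.2 ?_)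
      calc κ = F t ^ (-s) * (κ * F t ^ s) := by rw [mul_left_comm, hFs, mul_one]
        _ ≤ F t ^ (-s) * F' t :=
          mul_le_mul_of_nonneg_left (hineq t ht) (rpow_nonneg (hpos t ht).le _)
  have hba : F b ^ (1 - s) + κ * (s - 1) * b ≤ F a ^ (1 - s) + κ * (s - 1) * a :=
    hanti (left_mem_Icc.2 hab) (right_mem_Icc.2 hab) hab
  have := rpow_pos_of_pos (hpos b (right_mem_Icc.2 hab)) (1 - s)
  linarith

theorem sqrt_mul_rpow_half_le_of_mul_rpow_le_sq {c x y r : ℝ} (hx : 0 ≤ x) (hy : 0 ≤ y)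
    (h : c * x ^ r ≤ y ^ 2) : √c * x ^ (r / 2) ≤ y := by
  calc √c * x ^ (r / 2) = √(c * x ^ r) := by
        rw [sqrt_mul' c (rpow_nonneg hx r), sqrt_eq_rpow (x ^ r), ← rpow_mul hx]
        ring_nf
    _ ≤ √(y ^ 2) := sqrt_le_sqrt h
    _ = y := sqrt_sq hy

theorem sqrt_div_mul_rpow_le_deriv {F F' F'' : ℝ → ℝ} {w p a b : ℝ} (hp : 0 < p + 1)
    (hw : 0 ≤ w) (hab : a ≤ b) (hF : ∀ t ∈ Icc a b, HasDerivAt F (F' t) t)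
    (hF' : ∀ t ∈ Icc a b, HasDerivAt F' (F'' t) t) (hpos : ∀ t ∈ Icc a b, 0 < F t)
    (hF'nonneg : ∀ t ∈ Icc a b, 0 ≤ F' t) (hineq : ∀ t ∈ Icc a b, w * F t ^ p ≤ F'' t)
    (hgrowth : 2 * F a ^ (p + 1) ≤ F b ^ (p + 1)) :
    √(w / (p + 1)) * F b ^ ((p + 1) / 2) ≤ F' b := by
  have henergy := monotoneOn_sq_sub_rpow_of_mul_rpow_le (convex_Icc a b) hp.ne' hF hF' hpos
    hF'nonneg hineq (left_mem_Icc.2 hab) (right_mem_Icc.2 hab) hab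
  apply sqrt_mul_rpow_half_le_of_mul_rpow_le_sq (hpos b (right_mem_Icc.2 hab)).le
    (hF'nonneg b (right_mem_Icc.2 hab))
  have hw' : 0 ≤ w / (p + 1) := div_nonneg hw hp.le
  rw [mul_div_assoc] at henergy
  nlinarith [sq_nonneg (F' a), mul_le_mul_of_nonneg_left hgrowth hw']

theorem exists_rpow_lt_sqrt_mul_rpow_mul {c e K a q : ℝ} (hc : 0 < c) (he : 0 < e) (hK : 0 < K)
    (hqa : q - 2 < 2 * a * e) (T : ℝ) :
    ∃ x ≥ T, (K * x ^ a) ^ (-e) < √(c * (2 * x) ^ (-q)) * e * x := by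
  set A := √(c * 2 ^ (-q)) * e
  have hA : 0 < A := mul_pos (sqrt_pos.2 (by positivity)) he
  have hγ : 0 < 1 - q / 2 + a * e := by linarith
  obtain ⟨x, hxA, hxT⟩ := ((((tendsto_rpow_atTop hγ).const_mul_atTop hA).eventually_gt_atTop
    (K ^ (-e))).and (eventually_ge_atTop (max T 1))).exists
  have hx : 0 < x := zero_lt_one.trans_le (le_of_max_le_right hxT)
  refine ⟨x, le_of_max_le_left hxT, ?_⟩
  have hlhs : (K * x ^ a) ^ (-e) = K ^ (-e) / x ^ (a * e) := by
    rw [mul_rpow hK.le (rpow_nonneg hx.le a), ← rpow_mul hx.le, mul_neg, rpow_neg hx.le,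
      div_eq_mul_inv]
  have hrhs : √(c * (2 * x) ^ (-q)) * e * x = A * x ^ (1 - q / 2) := by
    rw [mul_rpow zero_le_two hx.le, ← mul_assoc, sqrt_mul' _ (rpow_nonneg hx.le _),
      sqrt_eq_rpow (x ^ (-q)), ← rpow_mul hx.le, show 1 - q / 2 = -q * (1 / 2) + 1 by ring,
      rpow_add hx, rpow_one]
    ring
  rw [hlhs, hrhs, div_lt_iff₀ (rpow_pos_of_pos hx _), mul_assoc, ← rpow_add hx]
  exact hxA

theorem false_of_mul_rpow_le_deriv_deriv_of_nonneg {F F' F'' : ℝ → ℝ} {p q k K a T : ℝ} (hp : 1 < p)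
    (hq : 0 ≤ q) (hk : 0 < k) (hK : 0 < K) (ha : 0 < a) (hpqa : q - 2 < a * (p - 1))
    (hT : 0 < T) (hF : ∀ t ∈ Ici T, HasDerivAt F (F' t) t)
    (hF' : ∀ t ∈ Ici T, HasDerivAt F' (F'' t) t)
    (hineq : ∀ t ∈ Ici T, k * t ^ (-q) * F t ^ p ≤ F'' t)
    (hlow : ∀ t ∈ Ici T, K * t ^ a ≤ F t) : False := by
  have hpos : ∀ t ∈ Ici T, 0 < F t := fun t ht =>
    (mul_pos hK (rpow_pos_of_pos (hT.trans_le ht) a)).trans_le (hlow t ht)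
  have hlim : Tendsto F atTop atTop := tendsto_atTop_mono' _ (eventually_atTop.2 ⟨T, hlow⟩)
    ((tendsto_rpow_atTop ha).const_mul_atTop hK)
  have hF'mono : MonotoneOn F' (Ici T) := (convex_Ici T).monotoneOn_of_hasDerivAt_nonneg hF'
    fun t ht => (mul_nonneg (mul_nonneg hk.le (rpow_nonneg (hT.trans_le ht).le _))
      (rpow_nonneg (hpos t ht).le _)).trans (hineq t ht)
  obtain ⟨T₂, hT₂, hF'nonneg⟩ := exists_forall_Ici_nonneg_of_tendsto_atTop hF hF'mono hlim
  obtain ⟨T₃, hT₃⟩ := eventually_atTop.1 ((((tendsto_rpow_atTop (by linarith : 0 < p + 1)).comp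
    hlim).eventually_ge_atTop (2 * F T₂ ^ (p + 1))).and (eventually_ge_atTop T₂))
  have hslope : ∀ x ∈ Ici T₃, ∀ u ∈ Icc x (2 * x),
      √(k / (p + 1) * (2 * x) ^ (-q)) * F u ^ ((p + 1) / 2) ≤ F' u := by
    intro x hx u hu
    obtain ⟨hFu, hT₂u⟩ := hT₃ u (le_trans hx hu.1)
    have hx0 : 0 < x := hT.trans_le (le_trans hT₂ (hT₃ x hx).2)
    have hsub : Icc T₂ u ⊆ Ici T := fun v hv => le_trans hT₂ hv.1
    rw [div_mul_eq_mul_div]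
    refine sqrt_div_mul_rpow_le_deriv (by linarith) (by positivity) hT₂u
      (fun v hv => hF v (hsub hv)) (fun v hv => hF' v (hsub hv)) (fun v hv => hpos v (hsub hv))
      (fun v hv => hF'nonneg v hv.1) (fun v hv => le_trans ?_ (hineq v (hsub hv))) hFu
    have hweight :=
      rpow_le_rpow_of_nonpos (hT.trans_le (hsub hv)) (hv.2.trans hu.2) (neg_nonpos.2 hq)
    exact mul_le_mul_of_nonneg_right (mul_le_mul_of_nonneg_left hweight hk.le)
      (rpow_nonneg (hpos v (hsub hv)).le p)
  obtain ⟨x, hxT₃, hx⟩ := exists_rpow_lt_sqrt_mul_rpow_mul (c := k / (p + 1)) (e := (p - 1) / 2)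
    (a := a) (q := q) (by positivity) (by linarith) hK (by linarith) T₃
  have hxT : x ∈ Ici T := le_trans hT₂ (hT₃ x hxT₃).2
  have hx0 : 0 < x := hT.trans_le hxT
  have hsub : Icc x (2 * x) ⊆ Ici T := fun t ht => le_trans hxT ht.1
  have hlifespan := mul_sub_le_rpow_of_mul_rpow_le_deriv (by linarith) (by linarith)
    (fun t ht => hF t (hsub ht)) (fun t ht => hpos t (hsub ht)) (hslope x hxT₃)
  have hFx := rpow_le_rpow_of_nonpos (mul_pos hK (rpow_pos_of_pos hx0 a)) (hlow x hxT)
    (by linarith : 1 - (p + 1) / 2 ≤ 0)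
  rw [show (p + 1) / 2 - 1 = (p - 1) / 2 by ring, show 2 * x - x = x by ring] at hlifespan
  rw [show 1 - (p + 1) / 2 = -((p - 1) / 2) by ring] at hlifespan hFx
  linarith

theorem false_of_mul_rpow_le_deriv_deriv {F F' F'' : ℝ → ℝ} {p q k K a T : ℝ} (hp : 1 < p)
    (hk : 0 < k) (hK : 0 < K) (ha : 0 < a) (hpqa : q - 2 < a * (p - 1)) (hT : 1 ≤ T)
    (hF : ∀ t ∈ Ici T, HasDerivAt F (F' t) t) (hF' : ∀ t ∈ Ici T, HasDerivAt F' (F'' t) t)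
    (hineq : ∀ t ∈ Ici T, k * t ^ (-q) * F t ^ p ≤ F'' t)
    (hlow : ∀ t ∈ Ici T, K * t ^ a ≤ F t) : False := by
  have hpa : 0 < a * (p - 1) := mul_pos ha (sub_pos.2 hp)
  refine false_of_mul_rpow_le_deriv_deriv_of_nonneg hp (le_max_right q 0) hk hK ha
    (sub_lt_iff_lt_add.2 (max_lt (by linarith) (by linarith))) (one_pos.trans_le hT) hF hF'
    (fun t ht => le_trans ?_ (hineq t ht)) hlow
  have hFt : 0 < F t := (mul_pos hK (rpow_pos_of_pos (by linarith [mem_Ici.1 ht]) a)).trans_le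
    (hlow t ht)
  have hweight := rpow_le_rpow_of_exponent_le (hT.trans ht) (neg_le_neg (le_max_left q 0))
  exact mul_le_mul_of_nonneg_right (mul_le_mul_of_nonneg_left hweight hk.le)
    (rpow_nonneg hFt.le p)

theorem ContDiffOn.hasDerivAt_deriv_deriv {f : ℝ → ℝ} {s : Set ℝ} (hf : ContDiffOn ℝ 2 f s)
    (hs : IsOpen s) {x : ℝ} (hx : x ∈ s) : HasDerivAt (deriv f) (deriv (deriv f) x) x :=
  (((hf.deriv_of_isOpen hs (by norm_num)).contDiffAt (hs.mem_nhds hx)).hasStrictDerivAt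
    one_ne_zero).hasDerivAt

theorem stmt0_general (p q K₁ R K₀ a T₀ T₁ : ℝ) (F : ℝ → ℝ)
    (hp : 1 < p) (hK₁ : 0 < K₁) (hR : 0 < R) (hK₀ : 0 < K₀)
    (ha1 : 1 ≤ a) (ha2 : (q - 2) / (p - 1) < a)
    (hF : ContDiffOn ℝ 2 F (Set.Ici (0:ℝ)))
    (hineq : ∀ t, T₁ ≤ t → K₁ * (t + R) ^ (-q) * F t ^ p ≤ deriv (deriv F) t)
    (hlow : ∀ t, T₀ ≤ t → K₀ * (t + R) ^ a ≤ F t) : False := by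
  set T := max (max T₀ T₁) 1 + R
  have hT : ∀ t ∈ Ici T, 1 ≤ t ∧ T₀ ≤ t - R ∧ T₁ ≤ t - R ∧ 0 < t - R := fun t ht => by
    simp only [mem_Ici, T] at ht
    refine ⟨?_, ?_, ?_, ?_⟩ <;> linarith [le_max_left T₀ T₁, le_max_right T₀ T₁,
      le_max_left (max T₀ T₁) 1, le_max_right (max T₀ T₁) 1]
  have hF₀ : ContDiffOn ℝ 2 F (Ioi 0) := hF.mono Ioi_subset_Ici_self
  have hdF : ∀ t ∈ Ioi (0 : ℝ), HasDerivAt F (deriv F t) t := fun t ht =>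
    ((hF₀.differentiableOn two_ne_zero).differentiableAt (isOpen_Ioi.mem_nhds ht)).hasDerivAt
  refine false_of_mul_rpow_le_deriv_deriv (F := fun t => F (t - R)) (a := a) hp hK₁ hK₀
    (by linarith) ((div_lt_iff₀ (by linarith)).1 ha2) (hT T self_mem_Ici).1
    (fun t ht => (hdF _ (hT t ht).2.2.2).comp_sub_const t R)
    (fun t ht => (hF₀.hasDerivAt_deriv_deriv isOpen_Ioi (hT t ht).2.2.2).comp_sub_const t R)
    (fun t ht => by simpa using hineq (t - R) (hT t ht).2.2.1)
    fun t ht => by simpa using hlow (t - R) (hT t ht).2.1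

/-- Blow-up lemma for ordinary differential inequalities (supercritical case):
no positive `C²` function on `[0,∞)` can satisfy `F'' ≥ K₁ (t+R)^{-q} F^p` on `[T₁,∞)`
together with the lower bound `F ≥ K₀ (t+R)^a` on `[T₀,∞)` with `a ≥ 1`,
`a > (q-2)/(p-1)`; hence the maximal existence time `T` is finite. -/
theorem stmt0 (p q K₁ R K₀ a T₀ T₁ : ℝ) (F : ℝ → ℝ)
    (hp : 1 < p) (hK₁ : 0 < K₁) (hR : 0 < R) (hK₀ : 0 < K₀)
    (hT₁ : 0 ≤ T₁) (hT₀ : 0 ≤ T₀) (ha1 : 1 ≤ a) (ha2 : (q - 2) / (p - 1) < a)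
    (hF : ContDiffOn ℝ 2 F (Set.Ici (0:ℝ)))
    (hpos : ∀ t ∈ Set.Ici (0:ℝ), 0 < F t)
    (hineq : ∀ t, T₁ ≤ t → K₁ * (t + R) ^ (-q) * F t ^ p ≤ deriv (deriv F) t)
    (hlow : ∀ t, T₀ ≤ t → K₀ * (t + R) ^ a ≤ F t) : False :=
  stmt0_general p q K₁ R K₀ a T₀ T₁ F hp hK₁ hR hK₀ ha1 ha2 hF hineq hlow
end

section
/- Let p>1, q ≥ p+1, and K₁, R > 0. There exists a constant K₀ = K₀(K₁) > 0 such that: if F∈C²([0,T)) is positive, satisfies F''(t) ≥ K₁(t+R)^{-q} F(t)^p for all t∈[T₁,T), and F(t) ≥ K₀(t+R)^{(q-2)/(p-1)} for all t∈[T₀,T) for some T₀,T₁∈[0,T), then T < ∞. -/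
/-!
With `a = (q - 2) / (p - 1)`, the lower bound `F ≥ K₀ (t + R) ^ a` turns `F'' ≥ K₁ (t + R) ^ (-q) F ^ p`
into the Euler-type inequality `(t + R) ^ 2 F'' ≥ K₁ K₀ ^ (p - 1) F`. Once `K₁ K₀ ^ (p - 1) ≥ L ^ 2`, the
quantity `(t + R) F' - L F` cannot stay negative and, once nonnegative, stays so; hence
`F ≳ (t + R) ^ L`. For `L = 2a` this growth makes the original inequality superlinear in Euler form,
`(t + R) ^ 2 F'' ≥ Q F ^ γ` with `γ = (p + 1) / 2 > 1`. A second barrier propagates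
`(t + R) F' ≥ ε F ^ r` for `r = (1 + γ) / 2`, so `F ^ (1 - r)`, a positive function, decreases at least
like `-(r - 1) ε log (t + R)`, which is absurd.
-/

open Set Real Filter Topology

lemma monotoneOn_Ici_of_hasDerivAt_nonneg {f f' : ℝ → ℝ} {c : ℝ}
    (hf : ∀ t ≥ c, HasDerivAt f (f' t) t) (hf' : ∀ t > c, 0 ≤ f' t) :
    MonotoneOn f (Ici c) :=
  monotoneOn_of_hasDerivWithinAt_nonneg (convex_Ici c)
    (fun t ht => (hf t ht).continuousAt.continuousWithinAt)
    (fun t ht => by rw [interior_Ici] at ht; exact (hf t (le_of_lt ht)).hasDerivWithinAt)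
    (fun t ht => by rw [interior_Ici] at ht; exact hf' t ht)

lemma nonneg_of_deriv_nonneg_where_nonpos {g g' : ℝ → ℝ} {c : ℝ}
    (hg : ∀ t ≥ c, HasDerivAt g (g' t) t) (hc : 0 ≤ g c)
    (hg' : ∀ t ≥ c, g t ≤ 0 → 0 ≤ g' t) : ∀ t ≥ c, 0 ≤ g t := by
  intro b hcb
  by_contra! hgb
  set S := Icc c b ∩ g ⁻¹' Ici 0
  have hcont : ContinuousOn g (Icc c b) := fun t ht =>
    (hg t ht.1).continuousAt.continuousWithinAt
  have hSbdd : BddAbove S := ⟨b, fun t ht => ht.1.2⟩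
  obtain ⟨⟨hca, hab⟩, hga⟩ : sSup S ∈ S :=
    (hcont.preimage_isClosed_of_isClosed isClosed_Icc isClosed_Ici).csSup_mem
      ⟨c, ⟨le_rfl, hcb⟩, hc⟩ hSbdd
  set a := sSup S
  have hneg : ∀ t ∈ Ioc a b, g t < 0 := fun t ht => by
    by_contra! h
    exact (le_csSup hSbdd ⟨⟨hca.trans ht.1.le, ht.2⟩, h⟩).not_gt ht.1
  have hmono : MonotoneOn g (Icc a b) := by
    refine monotoneOn_of_hasDerivWithinAt_nonneg (f' := g') (convex_Icc a b)
      (hcont.mono (Icc_subset_Icc_left hca)) (fun t ht => ?_) (fun t ht => ?_) <;>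
      rw [interior_Icc] at ht
    · exact (hg t (hca.trans ht.1.le)).hasDerivWithinAt
    · exact hg' t (hca.trans ht.1.le) (hneg t ⟨ht.1, ht.2.le⟩).le
  exact hgb.not_ge (hga.trans (hmono ⟨le_rfl, hab⟩ ⟨hab, le_rfl⟩ hab))

lemma tendsto_atTop_of_le_mul_deriv {g g' : ℝ → ℝ} {T R c : ℝ} (hTR : 0 < T + R)
    (hc : 0 < c) (hg : ∀ t ≥ T, HasDerivAt g (g' t) t) (hg' : ∀ t ≥ T, c ≤ (t + R) * g' t) :
    Tendsto g atTop atTop := by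
  have hmono : MonotoneOn (fun t => g t - c * log (t + R)) (Ici T) := by
    refine monotoneOn_Ici_of_hasDerivAt_nonneg (f' := fun t => g' t - c * (1 / (t + R)))
      (fun t ht => (hg t ht).sub ((((hasDerivAt_id t).add_const R).log ?_).const_mul c))
      (fun t ht => ?_)
    · simp only [id]; linarith
    · have htR : 0 < t + R := by linarith
      have := hg' t ht.le
      rw [sub_nonneg, ← mul_div_assoc, mul_one, div_le_iff₀ htR]
      linarith
  have hlog : Tendsto (fun t => g T - c * log (T + R) + c * log (t + R)) atTop atTop :=
    tendsto_atTop_add_const_left _ _ <| (tendsto_log_atTop.comp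
      (tendsto_atTop_add_const_right _ R tendsto_id)).const_mul_atTop hc
  refine tendsto_atTop_mono' _ ?_ hlog
  filter_upwards [eventually_ge_atTop T] with t ht
  have := hmono (le_refl T) ht ht
  simp only at this
  linarith

lemma hasDerivAt_deriv_of_contDiffOn_two {f : ℝ → ℝ} {U : Set ℝ} {x : ℝ}
    (hf : ContDiffOn ℝ 2 f U) (hU : IsOpen U) (hx : x ∈ U) :
    HasDerivAt f (deriv f x) x ∧ HasDerivAt (deriv f) (deriv (deriv f) x) x :=
  ⟨((hf.differentiableOn (by norm_num)).differentiableAt (hU.mem_nhds hx)).hasDerivAt,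
    (((hf.deriv_of_isOpen hU (by norm_num : (1 : WithTop ℕ∞) + 1 ≤ 2)).differentiableOn
      one_ne_zero).differentiableAt (hU.mem_nhds hx)).hasDerivAt⟩

lemma mul_rpow_le_sq_mul_of_mul_rpow_le {x y y'' K₁ K b s p q : ℝ} (hx : 0 < x) (hy : 0 < y)
    (hK₁ : 0 ≤ K₁) (hK : 0 ≤ K) (hs : 0 ≤ s) (hbs : b * s = q - 2) (hKy : K * x ^ b ≤ y)
    (h : K₁ * x ^ (-q) * y ^ p ≤ y'') :
    K₁ * K ^ s * y ^ (p - s) ≤ x ^ 2 * y'' := by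
  have hys : K ^ s * x ^ (q - 2) ≤ y ^ s := by
    rw [← hbs, rpow_mul hx.le, ← mul_rpow hK (by positivity)]
    exact rpow_le_rpow (by positivity) hKy hs
  have hx2 : x ^ 2 * x ^ (-q) * x ^ (q - 2) = 1 := by
    rw [← rpow_natCast, ← rpow_add hx, ← rpow_add hx]
    ring_nf
    exact rpow_zero x
  calc K₁ * K ^ s * y ^ (p - s)
      = x ^ 2 * (K₁ * x ^ (-q) * (K ^ s * x ^ (q - 2)) * y ^ (p - s)) := by
        linear_combination (K₁ * K ^ s * y ^ (p - s)) * hx2.symm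
    _ ≤ x ^ 2 * (K₁ * x ^ (-q) * y ^ s * y ^ (p - s)) := by gcongr
    _ = x ^ 2 * (K₁ * x ^ (-q) * y ^ p) := by
        rw [mul_assoc _ (y ^ s), ← rpow_add hy, add_sub_cancel]
    _ ≤ x ^ 2 * y'' := by gcongr

lemma exists_forall_ge_mul_le_mul_deriv {F F' F'' : ℝ → ℝ} {T R L b : ℝ}
    (hF : ∀ t ≥ T, HasDerivAt F (F' t) t) (hF' : ∀ t ≥ T, HasDerivAt F' (F'' t) t)
    (hTR : 0 < T + R) (hL : 1 ≤ L) (hb : 0 < b) (hFb : ∀ t ≥ T, b ≤ F t)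
    (hE : ∀ t ≥ T, L ^ 2 * F t ≤ (t + R) ^ 2 * F'' t) :
    ∃ t₀ ≥ T, ∀ t ≥ t₀, L * F t ≤ (t + R) * F' t := by
  set H := fun t => (t + R) * F' t - L * F t
  have hH : ∀ t ≥ T, HasDerivAt H (1 * F' t + (t + R) * F'' t - L * F' t) t := fun t ht =>
    (((hasDerivAt_id t).add_const R).mul (hF' t ht)).sub ((hF t ht).const_mul L)
  -- where `H ≤ 0`, `(t + R) H' = (t + R) ^ 2 F'' - (L - 1) (t + R) F' ≥ L ^ 2 F - (L - 1) L F`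
  have hH' : ∀ t ≥ T, H t ≤ 0 → L * b ≤ (t + R) * (1 * F' t + (t + R) * F'' t - L * F' t) := by
    intro t ht hHt
    have := mul_le_mul_of_nonneg_left hHt (by linarith : 0 ≤ L - 1)
    nlinarith [hE t ht, hFb t ht]
  obtain ⟨t₀, ht₀, hH₀⟩ : ∃ t₀ ≥ T, 0 ≤ H t₀ := by
    by_contra! h
    have hlim := tendsto_atTop_of_le_mul_deriv hTR (by positivity) hH
      (fun t ht => hH' t ht (h t ht).le)
    obtain ⟨t, hHt, ht⟩ := ((hlim.eventually_ge_atTop 0).and (eventually_ge_atTop T)).exists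
    exact (h t ht).not_ge hHt
  refine ⟨t₀, ht₀, fun t ht => ?_⟩
  have := nonneg_of_deriv_nonneg_where_nonpos (fun s hs => hH s (ht₀.trans hs)) hH₀
    (fun s hs hHs => (pos_of_mul_pos_right ((by positivity : 0 < L * b).trans_le
      (hH' s (ht₀.trans hs) hHs)) (by linarith)).le) t ht
  simp only [H] at this
  linarith

lemma mul_rpow_le_of_mul_le_mul_deriv {F F' : ℝ → ℝ} {T R L : ℝ}
    (hF : ∀ t ≥ T, HasDerivAt F (F' t) t) (hTR : 0 < T + R)
    (h : ∀ t ≥ T, L * F t ≤ (t + R) * F' t) :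
    ∀ t ≥ T, F T * (T + R) ^ (-L) * (t + R) ^ L ≤ F t := by
  have hmono : MonotoneOn (fun t => F t * (t + R) ^ (-L)) (Ici T) := by
    refine monotoneOn_Ici_of_hasDerivAt_nonneg (fun t ht => (hF t ht).mul
      (((hasDerivAt_id t).add_const R).rpow_const (Or.inl (by simp only [id]; linarith))))
      (fun t ht => ?_)
    have htR : 0 < t + R := by linarith
    rw [show -L = -L - 1 + 1 by ring, rpow_add_one htR.ne', add_sub_cancel_right]
    have := h t ht.le
    have := rpow_pos_of_pos htR (-L - 1)
    simp only [id]
    nlinarith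
  intro t ht
  have htR : 0 < t + R := by linarith
  have := mul_le_mul_of_nonneg_right (hmono (le_refl T) ht ht) (rpow_nonneg htR.le L)
  rwa [mul_assoc (F t), ← rpow_add htR, neg_add_cancel, rpow_zero, mul_one] at this

lemma false_of_rpow_le_mul_deriv {F F' : ℝ → ℝ} {T R ε r : ℝ}
    (hF : ∀ t ≥ T, HasDerivAt F (F' t) t) (hTR : 0 < T + R) (hFpos : ∀ t ≥ T, 0 < F t)
    (hε : 0 < ε) (hr : 1 < r) (h : ∀ t ≥ T, ε * F t ^ r ≤ (t + R) * F' t) : False := by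
  have hg : ∀ t ≥ T, HasDerivAt (fun u => F u ^ (1 - r) / (1 - r)) (F' t * F t ^ (-r)) t := by
    intro t ht
    refine (((hF t ht).rpow_const (Or.inl (hFpos t ht).ne')).div_const (1 - r)).congr_deriv ?_
    rw [show 1 - r - 1 = -r by ring]
    field_simp [(by linarith : 1 - r ≠ 0)]
  have hg' : ∀ t ≥ T, ε ≤ (t + R) * (F' t * F t ^ (-r)) := by
    intro t ht
    have := mul_le_mul_of_nonneg_right (h t ht) (rpow_nonneg (hFpos t ht).le (-r))
    rwa [mul_assoc, ← rpow_add (hFpos t ht), add_neg_cancel, rpow_zero, mul_one,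
      mul_assoc] at this
  obtain ⟨t, hgt, ht⟩ := (((tendsto_atTop_of_le_mul_deriv hTR hε hg hg').eventually_ge_atTop 0).and
    (eventually_ge_atTop T)).exists
  exact hgt.not_gt (div_neg_of_pos_of_neg (rpow_pos_of_pos (hFpos t ht) _) (by linarith))

lemma rpow_le_mul_deriv_of_rpow_le_sq_mul_deriv2 {F F' F'' : ℝ → ℝ} {T R Q ε r : ℝ}
    (hF : ∀ t ≥ T, HasDerivAt F (F' t) t) (hF' : ∀ t ≥ T, HasDerivAt F' (F'' t) t)
    (hTR : 0 < T + R) (hFpos : ∀ t ≥ T, 0 < F t) (hF'pos : ∀ t ≥ T, 0 ≤ F' t)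
    (hε : 0 ≤ ε) (hr : 0 ≤ r) (hεQ : r * ε ^ 2 ≤ Q)
    (h : ∀ t ≥ T, Q * F t ^ (2 * r - 1) ≤ (t + R) ^ 2 * F'' t)
    (h₀ : ε * F T ^ r ≤ (T + R) * F' T) :
    ∀ t ≥ T, ε * F t ^ r ≤ (t + R) * F' t := by
  set H := fun t => (t + R) * F' t - ε * F t ^ r
  have hH : ∀ t ≥ T, HasDerivAt H
      (1 * F' t + (t + R) * F'' t - ε * (F' t * r * F t ^ (r - 1))) t := fun t ht =>
    (((hasDerivAt_id t).add_const R).mul (hF' t ht)).sub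
      (((hF t ht).rpow_const (Or.inl (hFpos t ht).ne')).const_mul ε)
  intro t ht
  have := nonneg_of_deriv_nonneg_where_nonpos hH (by simp only [H]; linarith)
    (fun s hs hHs => ?_) t ht
  · simp only [H] at this
    linarith
  have hsR : 0 < s + R := by linarith
  have hFs := hFpos s hs
  -- where `H ≤ 0`, `(s + R) H' ≥ (s + R) ^ 2 F'' - r ε ^ 2 F ^ (2 r - 1) ≥ 0`
  have hdamp : ε * r * F s ^ (r - 1) * ((s + R) * F' s) ≤ r * ε ^ 2 * F s ^ (2 * r - 1) := by
    have hFF : F s ^ (r - 1) * F s ^ r = F s ^ (2 * r - 1) := by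
      rw [← rpow_add hFs]; ring_nf
    calc ε * r * F s ^ (r - 1) * ((s + R) * F' s)
        ≤ ε * r * F s ^ (r - 1) * (ε * F s ^ r) :=
          mul_le_mul_of_nonneg_left (by simp only [H] at hHs; linarith) (by positivity)
      _ = r * ε ^ 2 * F s ^ (2 * r - 1) := by rw [← hFF]; ring
  refine nonneg_of_mul_nonneg_right ?_ hsR
  have := mul_le_mul_of_nonneg_right hεQ (rpow_nonneg hFs.le (2 * r - 1))
  nlinarith [h s hs, mul_nonneg hsR.le (hF'pos s hs)]

lemma false_of_rpow_le_sq_mul_deriv2 {F F' F'' : ℝ → ℝ} {T R Q γ : ℝ}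
    (hF : ∀ t ≥ T, HasDerivAt F (F' t) t) (hF' : ∀ t ≥ T, HasDerivAt F' (F'' t) t)
    (hTR : 0 < T + R) (hFpos : ∀ t ≥ T, 0 < F t) (hF'pos : ∀ t ≥ T, 0 < F' t)
    (hQ : 0 < Q) (hγ : 1 < γ) (h : ∀ t ≥ T, Q * F t ^ γ ≤ (t + R) ^ 2 * F'' t) : False := by
  set r := (1 + γ) / 2
  have hr : 1 < r := by simp only [r]; linarith
  have hFT := hFpos T le_rfl
  set ε := min ((T + R) * F' T / F T ^ r) √(Q / r)
  have hε : 0 < ε := lt_min (by have := hF'pos T le_rfl; positivity) (by positivity)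
  have hεQ : r * ε ^ 2 ≤ Q := by
    have : ε ^ 2 ≤ Q / r :=
      (pow_le_pow_left₀ hε.le (min_le_right _ _) 2).trans (sq_sqrt (by positivity)).le
    rwa [le_div_iff₀ (by linarith), mul_comm] at this
  have h₀ : ε * F T ^ r ≤ (T + R) * F' T := by
    have := mul_le_mul_of_nonneg_right (min_le_left _ _ : ε ≤ _) (rpow_nonneg hFT.le r)
    rwa [div_mul_cancel₀ _ (rpow_pos_of_pos hFT r).ne'] at this
  refine false_of_rpow_le_mul_deriv hF hTR hFpos hε hr ?_
  refine rpow_le_mul_deriv_of_rpow_le_sq_mul_deriv2 hF hF' hTR hFpos (fun t ht => (hF'pos t ht).le)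
    hε.le (by linarith) hεQ (fun t ht => ?_) h₀
  rw [show 2 * r - 1 = γ by simp only [r]; ring]
  exact h t ht

/-- Blow-up lemma, critical case: for `q ≥ p+1` there exists `K₀ = K₀(K₁) > 0` such that
no positive `C²` function on `[0,∞)` satisfies `F'' ≥ K₁(t+R)^{-q}F^p` on `[T₁,∞)` and
`F ≥ K₀(t+R)^{(q-2)/(p-1)}` on `[T₀,∞)`; hence the maximal existence time is finite. -/
theorem stmt1 (p q K₁ R : ℝ) (hp : 1 < p) (hq : p + 1 ≤ q) (hK₁ : 0 < K₁) (hR : 0 < R) :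
    ∃ K₀ > (0:ℝ), ∀ (F : ℝ → ℝ) (T₀ T₁ : ℝ), 0 ≤ T₀ → 0 ≤ T₁ →
      ContDiffOn ℝ 2 F (Set.Ici (0:ℝ)) →
      (∀ t ∈ Set.Ici (0:ℝ), 0 < F t) →
      (∀ t, T₁ ≤ t → K₁ * (t + R) ^ (-q) * F t ^ p ≤ deriv (deriv F) t) →
      (∀ t, T₀ ≤ t → K₀ * (t + R) ^ ((q - 2) / (p - 1)) ≤ F t) → False := by
  set a := (q - 2) / (p - 1)
  have hap : a * (p - 1) = q - 2 := div_mul_cancel₀ _ (by linarith)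
  have ha : 1 ≤ a := (one_le_div (by linarith)).2 (by linarith)
  set K₀ := ((2 * a) ^ 2 / K₁) ^ (p - 1)⁻¹
  have hK₀ : K₁ * K₀ ^ (p - 1) = (2 * a) ^ 2 := by
    rw [rpow_inv_rpow (by positivity) (by linarith)]; field_simp
  refine ⟨K₀, by positivity, fun F T₀ T₁ hT₀ hT₁ hF hFpos hODE hlow => ?_⟩
  obtain ⟨T, hT₀T, hT₁T, hT⟩ : ∃ T, T₀ ≤ T ∧ T₁ ≤ T ∧ 0 < T :=
    ⟨max T₀ T₁ + 1, by linarith [le_max_left T₀ T₁], by linarith [le_max_right T₀ T₁],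
      by linarith [le_max_left T₀ T₁]⟩
  have hFT (t : ℝ) (ht : t ≥ T) : 0 < F t := hFpos t (by simp only [mem_Ici]; linarith)
  have hF₁ (t : ℝ) (ht : t ≥ T) := (hasDerivAt_deriv_of_contDiffOn_two
    (hF.mono Ioi_subset_Ici_self) isOpen_Ioi (show t ∈ Ioi 0 by simp only [mem_Ioi]; linarith)).1
  have hF₂ (t : ℝ) (ht : t ≥ T) := (hasDerivAt_deriv_of_contDiffOn_two
    (hF.mono Ioi_subset_Ici_self) isOpen_Ioi (show t ∈ Ioi 0 by simp only [mem_Ioi]; linarith)).2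
  have hE (t : ℝ) (ht : t ≥ T) : (2 * a) ^ 2 * F t ≤ (t + R) ^ 2 * deriv (deriv F) t := by
    have := mul_rpow_le_sq_mul_of_mul_rpow_le (by linarith) (hFT t ht) hK₁.le (by positivity)
      (by linarith) hap (hlow t (by linarith)) (hODE t (by linarith))
    rwa [hK₀, sub_sub_cancel, rpow_one] at this
  obtain ⟨t₀, ht₀, hlin⟩ := exists_forall_ge_mul_le_mul_deriv hF₁ hF₂ (by linarith) (by linarith)
    (by positivity : 0 < K₀ * R ^ a)
    (fun t ht => (mul_le_mul_of_nonneg_left (rpow_le_rpow hR.le (by linarith) (by linarith))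
      (by positivity)).trans (hlow t (by linarith))) hE
  have hgrowth := mul_rpow_le_of_mul_le_mul_deriv (fun t ht => hF₁ t (ht₀.trans ht))
    (by linarith) hlin
  set K' := F t₀ * (t₀ + R) ^ (-(2 * a))
  have hK' : 0 < K' := mul_pos (hFT t₀ ht₀) (rpow_pos_of_pos (by linarith) _)
  exact false_of_rpow_le_sq_mul_deriv2 (fun t ht => hF₁ t (ht₀.trans ht))
    (fun t ht => hF₂ t (ht₀.trans ht)) (by linarith) (fun t ht => hFT t (ht₀.trans ht))
    (fun t ht => pos_of_mul_pos_right ((mul_pos (by positivity) (hFT t (ht₀.trans ht))).trans_le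
      (hlin t ht)) (by linarith))
    (by positivity : 0 < K₁ * K' ^ ((p - 1) / 2)) (by linarith : 1 < p - (p - 1) / 2)
    (fun t ht => mul_rpow_le_sq_mul_of_mul_rpow_le (by linarith) (hFT t (ht₀.trans ht)) hK₁.le
      hK'.le (by linarith) (by linear_combination hap) (hgrowth t ht) (hODE t (by linarith)))
end

section
/- Let p > p₀(5) (where p₀(5) is the positive root of 4p² - 6p - 2 = 0, i.e. of (n-1)p²-(n+1)p-2=0 with n=5) and let κ satisfy (3-p)/(p-1) ≤ κ ≤ 2(p-1) if p∈(p₀(5),2), or 1<κ≤2 if p=2, or 1/(p-1) ≤ κ ≤ 2(p-1) if p>2. Then there is a constant C such that for all ξ ≥ 0: ∫_{-ξ}^{ξ} ⟨η+ξ⟩ ⟨η-ξ⟩^{-(p-1)} ⟨η⟩^{-p(κ-1)} dη ≤ C ⟨ξ⟩^{-(κ-p)}, where ⟨y⟩ = 1+|y|. -/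
set_option maxHeartbeats 1000000


open MeasureTheory


lemma myF_cont (q : ℝ) : Continuous fun t : ℝ => (1 + |t|) ^ (-q) :=
  Continuous.rpow_const (by continuity) (fun x => Or.inl (by positivity))

lemma myF_int (q a b : ℝ) : IntervalIntegrable (fun t : ℝ => (1 + |t|) ^ (-q)) volume a b :=
  (myF_cont q).intervalIntegrable a b

lemma myF_nonneg (q t : ℝ) : 0 ≤ (1 + |t|) ^ (-q) := Real.rpow_nonneg (by positivity) _

lemma integral_F_eq (q X : ℝ) (hq : q ≠ 1) (hX : 0 ≤ X) :
    ∫ t in (0:ℝ)..X, (1 + |t|) ^ (-q) = ((1 + X) ^ (1 - q) - 1) / (1 - q) := by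
  have h1 : ∫ t in (0:ℝ)..X, (1 + |t|) ^ (-q) = ∫ t in (0:ℝ)..X, (1 + t) ^ (-q) := by
    apply intervalIntegral.integral_congr
    intro t ht
    rw [Set.uIcc_of_le hX] at ht
    show (1 + |t|) ^ (-q) = (1 + t) ^ (-q)
    rw [abs_of_nonneg ht.1]
  have h2 : ∫ t in (0:ℝ)..X, (1 + t) ^ (-q) = ∫ t in (1:ℝ)..(1+X), t ^ (-q) := by
    have := intervalIntegral.integral_comp_add_left (a := (0:ℝ)) (b := X) (fun t => t ^ (-q)) 1
    simpa using this
  rw [h1, h2, integral_rpow]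
  · rw [Real.one_rpow, show -q + 1 = 1 - q by ring]
  · right
    constructor
    · intro h; apply hq; linarith [neg_eq_iff_eq_neg.mp h]
    · intro h
      rw [Set.mem_uIcc] at h
      rcases h with h | h <;> linarith [h.1, h.2]

lemma master (q e X : ℝ) (hq : q ≠ 1) (he0 : 0 ≤ e) (he : 1 - q ≤ e) (hX : 0 ≤ X) :
    ∫ t in (0:ℝ)..X, (1 + |t|) ^ (-q) ≤ (1 + X) ^ e / |q - 1| := by
  rw [integral_F_eq q X hq hX]
  have hX1 : (1:ℝ) ≤ 1 + X := by linarith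
  have hy : 1 ≤ (1 + X) ^ e := by
    calc (1:ℝ) = (1+X) ^ (0:ℝ) := (Real.rpow_zero _).symm
    _ ≤ (1+X) ^ e := Real.rpow_le_rpow_of_exponent_le hX1 he0
  rcases lt_or_gt_of_ne hq with h | h
  · rw [abs_of_neg (by linarith : q - 1 < 0)]
    have h2 : (0:ℝ) < 1 - q := by linarith
    rw [show -(q-1) = 1 - q by ring, div_le_div_iff₀ h2 h2]
    have h1 : (1 + X) ^ (1 - q) ≤ (1 + X) ^ e := Real.rpow_le_rpow_of_exponent_le hX1 he
    nlinarith
  · rw [abs_of_pos (by linarith : 0 < q - 1)]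
    have h2 : (0:ℝ) < q - 1 := by linarith
    have key : ((1 + X) ^ (1 - q) - 1) / (1 - q) = (1 - (1 + X) ^ (1 - q)) / (q - 1) := by
      have hne : q - 1 ≠ 0 := ne_of_gt h2
      have hne' : 1 - q ≠ 0 := by intro hh; apply hne; linarith
      field_simp
      ring
    rw [key, div_le_div_iff₀ h2 h2]
    have h1 : 0 ≤ (1 + X) ^ (1 - q) := Real.rpow_nonneg (by linarith) _
    nlinarith

lemma F_reflect (q X : ℝ) :
    ∫ t in (-X)..(0:ℝ), (1 + |t|) ^ (-q) = ∫ t in (0:ℝ)..X, (1 + |t|) ^ (-q) := by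
  have := intervalIntegral.integral_comp_neg (a := (0:ℝ)) (b := X) (fun t : ℝ => (1 + |t|) ^ (-q))
  simpa [abs_neg] using this.symm


/-- Basic integral estimate: for `p > p₀(5) = (3+√17)/4` and admissible `κ`,
`∫_{-ξ}^{ξ} ⟨η+ξ⟩⟨η-ξ⟩^{-(p-1)}⟨η⟩^{-p(κ-1)} dη ≲ ⟨ξ⟩^{-(κ-p)}` with `⟨y⟩ = 1+|y|`. -/
theorem stmt2 (p κ : ℝ) (hp : (3 + Real.sqrt 17) / 4 < p)
    (hκ1 : p < 2 → (3 - p) / (p - 1) ≤ κ ∧ κ ≤ 2 * (p - 1))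
    (hκ2 : p = 2 → 1 < κ ∧ κ ≤ 2)
    (hκ3 : 2 < p → 1 / (p - 1) ≤ κ ∧ κ ≤ 2 * (p - 1)) :
    ∃ C > (0:ℝ), ∀ ξ ≥ (0:ℝ),
      (∫ η in (-ξ)..ξ,
        (1 + |η + ξ|) * (1 + |η - ξ|) ^ (-(p - 1)) * (1 + |η|) ^ (-(p * (κ - 1))))
        ≤ C * (1 + |ξ|) ^ (-(κ - p)) := by
  -- basic numeric facts
  have hs : (4:ℝ) < Real.sqrt 17 := by
    have h16 : (4:ℝ) = Real.sqrt 16 := by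
      rw [show (16:ℝ) = 4 ^ 2 by norm_num, Real.sqrt_sq (by norm_num : (0:ℝ) ≤ 4)]
    rw [h16]
    exact Real.sqrt_lt_sqrt (by norm_num) (by norm_num)
  have hp1 : (7:ℝ)/4 < p := by linarith
  have hp0 : (0:ℝ) < p := by linarith
  have hpm1 : (0:ℝ) < p - 1 := by linarith
  have hP : 1 < p * (2*p - 3) := by
    have h1 : Real.sqrt 17 < 4*p - 3 := by linarith
    have h2 : Real.sqrt 17 ^ 2 = 17 := Real.sq_sqrt (by norm_num)
    nlinarith [Real.sqrt_nonneg 17]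
  have hκu : κ ≤ 2*(p-1) := by
    rcases lt_trichotomy p 2 with h | h | h
    · exact (hκ1 h).2
    · subst h; linarith [(hκ2 rfl).2]
    · exact (hκ3 h).2
  have hA : 3 - p ≤ κ * (p-1) := by
    rcases lt_trichotomy p 2 with h | h | h
    · have := (hκ1 h).1; rw [div_le_iff₀ hpm1] at this; linarith
    · subst h; nlinarith [(hκ2 rfl).1]
    · have := (hκ3 h).1; rw [div_le_iff₀ hpm1] at this; nlinarith
  have hB : 1 ≤ κ * (p-1) := by
    rcases lt_trichotomy p 2 with h | h | h
    · nlinarith [hA]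
    · subst h; nlinarith [(hκ2 rfl).1]
    · have := (hκ3 h).1; rw [div_le_iff₀ hpm1] at this; linarith
  set b : ℝ := p * (κ - 1) with hbdef
  set q₁ : ℝ := if b = 1 then 3 - 2*p + κ else b with hq₁def
  set q₂ : ℝ := if p = 2 then 2 - κ*(p-1) else p - 1 with hq₂def
  have hq₁ : q₁ ≠ 1 ∧ q₁ ≤ b ∧ 3 - 2*p + κ ≤ q₁ := by
    rw [hq₁def]; split_ifs with h
    · have hlt : κ < 2*p - 2 := by nlinarith [hP, hp0, h]
      exact ⟨by intro hh; nlinarith, by rw [h]; linarith, le_rfl⟩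
    · exact ⟨h, le_rfl, by nlinarith [hA]⟩
  have hq₂ : q₂ ≠ 1 ∧ q₂ ≤ p - 1 ∧ 2 - κ*(p-1) ≤ q₂ := by
    rw [hq₂def]; split_ifs with h
    · subst h
      have := (hκ2 rfl).1
      exact ⟨by intro hh; nlinarith, by nlinarith, le_rfl⟩
    · refine ⟨?_, le_rfl, by linarith [hA]⟩
      intro hh; apply h; linarith
  have hq₁abs : (0:ℝ) < |q₁ - 1| := abs_pos.mpr (sub_ne_zero.mpr hq₁.1)
  have hq₂abs : (0:ℝ) < |q₂ - 1| := abs_pos.mpr (sub_ne_zero.mpr hq₂.1)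
  have hc1 : (0:ℝ) < 4 * 2^(p-1) / |q₁ - 1| := by
    apply div_pos _ hq₁abs; positivity
  have hc2 : (0:ℝ) < 2 * 2^|b| / |q₂ - 1| := by
    apply div_pos _ hq₂abs; positivity
  refine ⟨4 * 2^(p-1) / |q₁ - 1| + 2 * 2^|b| / |q₂ - 1|, by linarith, ?_⟩
  intro ξ hξ
  rw [abs_of_nonneg hξ, show -(κ - p) = p - κ by ring]
  set T : ℝ := 1 + ξ with hTdef
  have hT0 : (0:ℝ) < T := by simp only [hTdef]; linarith
  have hT1 : (1:ℝ) ≤ T := by simp only [hTdef]; linarith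
  set f : ℝ → ℝ := fun η => (1 + |η + ξ|) * (1 + |η - ξ|) ^ (-(p - 1)) * (1 + |η|) ^ (-b)
    with hfdef
  have c0 : Continuous fun η : ℝ => 1 + |η + ξ| :=
    continuous_const.add (continuous_id.add continuous_const).abs
  have c1 : Continuous fun η : ℝ => 1 + |η - ξ| :=
    continuous_const.add (continuous_id.sub continuous_const).abs
  have c2 : Continuous fun η : ℝ => 1 + |η| := continuous_const.add continuous_abs
  have c3 : Continuous fun η : ℝ => 1 + |ξ - η| :=
    continuous_const.add (continuous_const.sub continuous_id).abs
  have hcont_f : Continuous f :=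
    ((c0.mul (c1.rpow_const (fun x => Or.inl (by positivity)))).mul
      (c2.rpow_const (fun x => Or.inl (by positivity))))
  have hfint : ∀ u v : ℝ, IntervalIntegrable f volume u v := fun u v =>
    hcont_f.intervalIntegrable u v
  have hsplit : (∫ η in (-ξ)..ξ, f η)
      = (∫ η in (-ξ)..(ξ/2), f η) + ∫ η in (ξ/2)..ξ, f η :=
    (intervalIntegral.integral_add_adjacent_intervals (hfint _ _) (hfint _ _)).symm
  -- Region 1
  set K₁ : ℝ := 2*T * (T/2)^(-(p-1)) with hK₁def
  have hT0' : (0:ℝ) < T/2 := by linarith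
  have hK₁0 : 0 ≤ K₁ :=
    mul_nonneg (by linarith) (Real.rpow_nonneg (le_of_lt hT0') _)
  have h1 : (∫ η in (-ξ)..(ξ/2), f η)
      ≤ ∫ η in (-ξ)..(ξ/2), K₁ * (1 + |η|)^(-q₁) := by
    apply intervalIntegral.integral_mono_on (by linarith) (hfint _ _)
      ((myF_int q₁ _ _).const_mul K₁)
    intro η hη
    obtain ⟨hη1, hη2⟩ := hη
    have habs : |η| ≤ ξ := abs_le.mpr ⟨by linarith, by linarith⟩
    have e1 : 1 + |η + ξ| ≤ 2*T := by
      have h := abs_add_le η ξ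
      rw [abs_of_nonneg hξ] at h
      simp only [hTdef]; linarith
    have e2 : (1 + |η - ξ|)^(-(p-1)) ≤ (T/2)^(-(p-1)) := by
      apply Real.rpow_le_rpow_of_nonpos hT0' _ (by linarith)
      have h' : ξ - η ≤ |η - ξ| := by rw [abs_sub_comm]; exact le_abs_self _
      simp only [hTdef]; linarith
    have e3 : (1 + |η|)^(-b) ≤ (1 + |η|)^(-q₁) :=
      Real.rpow_le_rpow_of_exponent_le (by linarith [abs_nonneg η]) (neg_le_neg hq₁.2.1)
    calc f η ≤ (2*T * (T/2)^(-(p-1))) * (1 + |η|)^(-q₁) := by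
          apply mul_le_mul _ e3 (myF_nonneg b η)
            (mul_nonneg (by linarith) (Real.rpow_nonneg (le_of_lt hT0') _))
          apply mul_le_mul e1 e2 (Real.rpow_nonneg (by positivity) _) (by linarith)
      _ = K₁ * (1 + |η|)^(-q₁) := by rw [hK₁def]
  have h1b : (∫ η in (-ξ)..(ξ/2), K₁ * (1 + |η|)^(-q₁))
      = K₁ * ∫ η in (-ξ)..(ξ/2), (1 + |η|)^(-q₁) := intervalIntegral.integral_const_mul _ _
  have h1c : (∫ η in (-ξ)..(ξ/2), (1 + |η|)^(-q₁)) ≤ ∫ η in (-ξ)..ξ, (1 + |η|)^(-q₁) :=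
    intervalIntegral.integral_mono_interval le_rfl (by linarith) (by linarith)
      (Filter.Eventually.of_forall (fun t => myF_nonneg q₁ t)) (myF_int q₁ _ _)
  have h1d : (∫ η in (-ξ)..ξ, (1 + |η|)^(-q₁)) = 2 * ∫ t in (0:ℝ)..ξ, (1 + |t|)^(-q₁) := by
    rw [← intervalIntegral.integral_add_adjacent_intervals (myF_int q₁ (-ξ) 0) (myF_int q₁ 0 ξ),
      F_reflect]
    ring
  have h1e : (∫ t in (0:ℝ)..ξ, (1 + |t|)^(-q₁)) ≤ T^(2*p-2-κ) / |q₁ - 1| :=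
    master q₁ (2*p-2-κ) ξ hq₁.1 (by linarith) (by linarith [hq₁.2.2]) hξ
  -- Region 2
  set K₂ : ℝ := 2*T * (2^|b| * T^(-b)) with hK₂def
  have hK₂0 : 0 ≤ K₂ :=
    mul_nonneg (by linarith) (mul_nonneg (Real.rpow_nonneg (by norm_num) _)
      (Real.rpow_nonneg (le_of_lt hT0) _))
  have hcontg₂ : Continuous fun η : ℝ => (1 + |ξ - η|)^(-q₂) :=
    c3.rpow_const (fun x => Or.inl (by positivity))
  have h2 : (∫ η in (ξ/2)..ξ, f η)
      ≤ ∫ η in (ξ/2)..ξ, K₂ * (1 + |ξ - η|)^(-q₂) := by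
    apply intervalIntegral.integral_mono_on (by linarith) (hfint _ _)
      ((hcontg₂.intervalIntegrable _ _).const_mul K₂)
    intro η hη
    obtain ⟨hη1, hη2⟩ := hη
    have hη0 : 0 ≤ η := by linarith
    have e1 : 1 + |η + ξ| ≤ 2*T := by
      have h := abs_add_le η ξ
      rw [abs_of_nonneg hξ, abs_of_nonneg hη0] at h
      simp only [hTdef]; linarith
    have e2 : (1 + |η - ξ|)^(-(p-1)) ≤ (1 + |ξ - η|)^(-q₂) := by
      rw [abs_sub_comm]
      exact Real.rpow_le_rpow_of_exponent_le (by linarith [abs_nonneg (ξ - η)])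
        (by linarith [hq₂.2.1])
    have e3 : (1 + |η|)^(-b) ≤ 2^|b| * T^(-b) := by
      rw [abs_of_nonneg hη0]
      have hbase : T/2 ≤ 1 + η := by simp only [hTdef]; linarith
      rcases le_or_gt 0 b with hb | hb
      · rw [abs_of_nonneg hb]
        have h1 : (1 + η)^(-b) ≤ (T/2)^(-b) :=
          Real.rpow_le_rpow_of_nonpos hT0' hbase (by linarith)
        have heq : (T/2)^(-b) = 2^b * T^(-b) := by
          rw [Real.div_rpow (le_of_lt hT0) (by norm_num),
            Real.rpow_neg (by norm_num : (0:ℝ) ≤ 2), div_inv_eq_mul]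
          exact mul_comm _ _
        rw [← heq]; exact h1
      · rw [abs_of_neg hb]
        have h1 : (1 + η)^(-b) ≤ T^(-b) := by
          apply Real.rpow_le_rpow (by positivity) _ (by linarith)
          simp only [hTdef]; linarith
        have h2' : 1 ≤ (2:ℝ)^(-b) := Real.one_le_rpow one_le_two (by linarith)
        nlinarith [Real.rpow_nonneg (le_of_lt hT0) (-b)]
    calc f η ≤ (2*T * (1 + |ξ - η|)^(-q₂)) * (2^|b| * T^(-b)) := by
          apply mul_le_mul _ e3 (myF_nonneg b η)
            (mul_nonneg (by linarith) (Real.rpow_nonneg (by positivity) _))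
          apply mul_le_mul e1 e2 (Real.rpow_nonneg (by positivity) _) (by linarith)
      _ = K₂ * (1 + |ξ - η|)^(-q₂) := by rw [hK₂def]; ring
  have h2b : (∫ η in (ξ/2)..ξ, K₂ * (1 + |ξ - η|)^(-q₂))
      = K₂ * ∫ η in (ξ/2)..ξ, (1 + |ξ - η|)^(-q₂) := intervalIntegral.integral_const_mul _ _
  have h2c : (∫ η in (ξ/2)..ξ, (1 + |ξ - η|)^(-q₂)) = ∫ t in (0:ℝ)..(ξ/2), (1 + |t|)^(-q₂) := by
    have := intervalIntegral.integral_comp_sub_left (a := ξ/2) (b := ξ)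
      (fun t : ℝ => (1 + |t|)^(-q₂)) ξ
    rw [sub_self, show ξ - ξ/2 = ξ/2 by ring] at this
    exact this
  have h2d : (∫ t in (0:ℝ)..(ξ/2), (1 + |t|)^(-q₂)) ≤ ∫ t in (0:ℝ)..ξ, (1 + |t|)^(-q₂) :=
    intervalIntegral.integral_mono_interval le_rfl (by linarith) (by linarith)
      (Filter.Eventually.of_forall (fun t => myF_nonneg q₂ t)) (myF_int q₂ _ _)
  have h2e : (∫ t in (0:ℝ)..ξ, (1 + |t|)^(-q₂)) ≤ T^(κ*(p-1)-1) / |q₂ - 1| :=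
    master q₂ (κ*(p-1)-1) ξ hq₂.1 (by linarith) (by linarith [hq₂.2.2]) hξ
  -- assemble
  have keyA : K₁ * (2 * (T^(2*p-2-κ) / |q₁ - 1|)) = (4 * 2^(p-1) / |q₁ - 1|) * T^(p-κ) := by
    have hdiv : (T/2)^(-(p-1)) = 2^(p-1) * T^(-(p-1)) := by
      rw [Real.div_rpow (le_of_lt hT0) (by norm_num),
        Real.rpow_neg (by norm_num : (0:ℝ) ≤ 2), div_inv_eq_mul]
      exact mul_comm _ _
    have hpow : T^(p-κ) = T * (T^(-(p-1)) * T^(2*p-2-κ)) := by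
      rw [← Real.rpow_add hT0, show T * T ^ (-(p - 1) + (2 * p - 2 - κ))
        = T^(1:ℝ) * T ^ (-(p - 1) + (2 * p - 2 - κ)) by rw [Real.rpow_one],
        ← Real.rpow_add hT0]
      congr 1; ring
    rw [hK₁def, hdiv, hpow]; ring
  have keyB : K₂ * (T^(κ*(p-1)-1) / |q₂ - 1|) = (2 * 2^|b| / |q₂ - 1|) * T^(p-κ) := by
    have hpow : T^(p-κ) = T * (T^(-b) * T^(κ*(p-1)-1)) := by
      rw [← Real.rpow_add hT0, show T * T ^ (-b + (κ*(p-1)-1))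
        = T^(1:ℝ) * T ^ (-b + (κ*(p-1)-1)) by rw [Real.rpow_one],
        ← Real.rpow_add hT0]
      congr 1; rw [hbdef]; ring
    rw [hK₂def, hpow]; ring
  calc (∫ η in (-ξ)..ξ, f η)
      = (∫ η in (-ξ)..(ξ/2), f η) + ∫ η in (ξ/2)..ξ, f η := hsplit
    _ ≤ K₁ * (2 * (T^(2*p-2-κ) / |q₁ - 1|)) + K₂ * (T^(κ*(p-1)-1) / |q₂ - 1|) := by
        apply add_le_add
        · refine le_trans h1 ?_
          rw [h1b]
          apply mul_le_mul_of_nonneg_left _ hK₁0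
          refine le_trans h1c ?_
          rw [h1d]
          exact mul_le_mul_of_nonneg_left h1e (by norm_num)
        · refine le_trans h2 ?_
          rw [h2b]
          apply mul_le_mul_of_nonneg_left _ hK₂0
          rw [h2c]
          exact le_trans h2d h2e
    _ = (4 * 2^(p-1) / |q₁ - 1| + 2 * 2^|b| / |q₂ - 1|) * T^(p-κ) := by
        rw [keyA, keyB]; ring
end

section
/- Let n ≥ 1 and μ > 0. Define q = 1 + 2/(n-1+μ), r = 1 + 2/(n-1+μ/2), and p₀(n+μ) = (q + √(q² + 4(q-1)))/2. Then p₀(n+μ) ≥ r if and only if μ(n-3) + 2(n-1)² ≥ 0. In particular p₀(n+μ) ≥ r for all μ>0 whenever n ≥ 3. -/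
/-- With `q = 1+2/(n-1+μ)`, `r = 1+2/(n-1+μ/2)` and
`p₀(n+μ) = (q+√(q²+4(q-1)))/2`, one has `p₀(n+μ) ≥ r` iff `μ(n-3)+2(n-1)² ≥ 0`;
in particular `p₀(n+μ) ≥ r` for all `μ > 0` whenever `n ≥ 3`. -/
theorem stmt5 (n : ℕ) (hn : 1 ≤ n) (μ : ℝ) (hμ : 0 < μ) (q r p0 : ℝ)
    (hq : q = 1 + 2 / ((n:ℝ) - 1 + μ))
    (hr : r = 1 + 2 / ((n:ℝ) - 1 + μ / 2))
    (hp0 : p0 = (q + Real.sqrt (q ^ 2 + 4 * (q - 1))) / 2) :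
    (r ≤ p0 ↔ 0 ≤ μ * ((n:ℝ) - 3) + 2 * ((n:ℝ) - 1) ^ 2) ∧ (3 ≤ n → r ≤ p0) := by
  have hs : (0:ℝ) ≤ (n:ℝ) - 1 := by
    have : (1:ℝ) ≤ (n:ℝ) := by exact_mod_cast hn
    linarith
  have ha : (0:ℝ) < (n:ℝ) - 1 + μ := by linarith
  have hb : (0:ℝ) < (n:ℝ) - 1 + μ / 2 := by linarith
  have hq1 : 1 < q := by
    rw [hq]; have := div_pos (by norm_num : (0:ℝ) < 2) ha; linarith
  have hrq : 0 < 2 * r - q := by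
    have h1 : q ≤ r := by
      rw [hq, hr]
      have : 2 / ((n:ℝ) - 1 + μ) ≤ 2 / ((n:ℝ) - 1 + μ / 2) :=
        div_le_div_of_nonneg_left (by norm_num) hb (by linarith)
      linarith
    linarith
  have key : r ≤ p0 ↔ (2 * r - q) ^ 2 ≤ q ^ 2 + 4 * (q - 1) := by
    rw [hp0]
    constructor
    · intro h
      have h2 : 2 * r - q ≤ Real.sqrt (q ^ 2 + 4 * (q - 1)) := by linarith
      exact (Real.le_sqrt' hrq).mp h2
    · intro h
      have h2 : 2 * r - q ≤ Real.sqrt (q ^ 2 + 4 * (q - 1)) :=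
        Real.le_sqrt_of_sq_le h
      linarith
  have hd : (0:ℝ) < ((n:ℝ) - 1 + μ) * ((n:ℝ) - 1 + μ / 2) ^ 2 := by positivity
  have hid : q ^ 2 + 4 * (q - 1) - (2 * r - q) ^ 2 =
      4 * (μ * ((n:ℝ) - 3) + 2 * ((n:ℝ) - 1) ^ 2) /
        (((n:ℝ) - 1 + μ) * (((n:ℝ) - 1 + μ / 2) ^ 2)) := by
    rw [hq, hr]
    field_simp
    ring
  have key2 : (2 * r - q) ^ 2 ≤ q ^ 2 + 4 * (q - 1) ↔
      0 ≤ μ * ((n:ℝ) - 3) + 2 * ((n:ℝ) - 1) ^ 2 := by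
    rw [← sub_nonneg, hid, le_div_iff₀ hd, zero_mul]
    constructor <;> intro <;> linarith
  constructor
  · rw [key, key2]
  · intro h3
    rw [key, key2]
    have : (3:ℝ) ≤ (n:ℝ) := by exact_mod_cast h3
    nlinarith [sq_nonneg ((n:ℝ) - 1)]
end

section
/- Let κ > 1 and ε > 0, and let g: ℝ → ℝ be C¹, even, with |g(r)| ≤ ε(1+|r|)^{-(κ+1)} and |g'(r)| ≤ ε(1+|r|)^{-(κ+2)} for all r. Define H(ρ)=ρg(ρ)/2 and u(t,r) = ∫_{-1}^{1} H(t+rσ)dσ. Then there is a constant C (depending only on κ) such that for all t ≥ 0 and r ∈ ℝ: |u(t,r)| ≤ Cε (1+t+|r|)^{-1} (1+|t-|r||)^{-(κ-1)} and |∂_r(ru)(t,r)| ≤ Cε (1+|r|)(1+t+|r|)^{-1}(1+|t-|r||)^{-(κ-1)}. -/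
/-!
Write `H(ρ) = ρ g(ρ) / 2`: it is continuous, odd, and `|H(ρ)| ≤ (ε/2)⟨ρ⟩^{-κ}`. Substituting
`x = t + rσ` gives `r u(t,r) = ∫_{t-r}^{t+r} H`, hence `∂_r(ru) = H(t+r) + H(t-r)`, which is
bounded pointwise since `|t ± r| ≥ |t - |r||`. For `u` itself, with `s = |r|`: if `2s ≥ 1 + t`,
oddness of `H` cuts the integral down to `[|t-s|, t+s]`, the tail integral of `⟨x⟩^{-κ}` is
`≲ ⟨t-s⟩^{-(κ-1)}`, and `1/s ≲ ⟨t+s⟩^{-1}`; if `2s < 1 + t`, then `⟨t+sσ⟩ ≳ ⟨t-s⟩ ≳ ⟨t+s⟩` on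
`[-1,1]` and the pointwise bound suffices.
-/

open MeasureTheory intervalIntegral Real

noncomputable def waveWeight (κ t s : ℝ) : ℝ :=
  (1 + t + s) ^ (-(1:ℝ)) * (1 + |t - s|) ^ (-(κ - 1))

lemma waveWeight_nonneg (κ t s : ℝ) (ht : 0 ≤ t) (hs : 0 ≤ s) : 0 ≤ waveWeight κ t s := by
  unfold waveWeight
  have : 0 ≤ 1 + t + s := by linarith
  positivity

lemma rpow_neg_le_mul_rpow_neg {x y c p : ℝ} (hx : 0 < x) (hy : 0 < y) (hp : 0 ≤ p)
    (h : y ≤ c * x) : x ^ (-p) ≤ c ^ p * y ^ (-p) := by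
  have hc : 0 < c := pos_of_mul_pos_left (hy.trans_le h) hx.le
  calc x ^ (-p) = c ^ p * (c * x) ^ (-p) := by
        rw [mul_rpow hc.le hx.le, rpow_neg hc.le, ← mul_assoc,
          mul_inv_cancel₀ (rpow_pos_of_pos hc p).ne', one_mul]
    _ ≤ c ^ p * y ^ (-p) :=
        mul_le_mul_of_nonneg_left (rpow_le_rpow_of_nonpos hy h (neg_nonpos.2 hp)) (by positivity)

lemma integral_one_add_rpow_neg_le {κ a b : ℝ} (hκ : 1 < κ) (ha : -1 < a) (hab : a ≤ b) :
    ∫ x in a..b, (1 + x) ^ (-κ) ≤ (1 + a) ^ (-(κ - 1)) / (κ - 1) := by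
  have h0 : (0:ℝ) ∉ Set.uIcc (1 + a) (1 + b) := by
    rw [Set.uIcc_of_le (by linarith)]; exact fun h => by linarith [h.1]
  rw [integral_comp_add_left (fun x => x ^ (-κ)), integral_rpow (Or.inr ⟨by linarith, h0⟩),
    show -κ + 1 = -(κ - 1) by ring, ← neg_div_neg_eq, neg_sub, neg_neg]
  exact div_le_div_of_nonneg_right (sub_le_self _ (rpow_nonneg (by linarith) _)) (by linarith)

lemma integral_neg_self_eq_zero_of_odd {f : ℝ → ℝ} (hf : ∀ x, f (-x) = -f x) (a : ℝ) :
    ∫ x in -a..a, f x = 0 := by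
  have h := integral_comp_neg (a := -a) (b := a) f
  simp only [neg_neg, hf, intervalIntegral.integral_neg] at h
  linarith

lemma integral_sub_add_eq_integral_abs_sub_of_odd {f : ℝ → ℝ} (hf : Continuous f)
    (hodd : ∀ x, f (-x) = -f x) (t s : ℝ) :
    ∫ x in (t - s)..(t + s), f x = ∫ x in |t - s|..(t + s), f x := by
  rcases le_total 0 (t - s) with h | h
  · rw [abs_of_nonneg h]
  · have hzero := integral_neg_self_eq_zero_of_odd hodd (-(t - s))
    rw [neg_neg] at hzero
    rw [abs_of_nonpos h, ← integral_add_adjacent_intervals (b := -(t - s))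
      (hf.intervalIntegrable _ _) (hf.intervalIntegrable _ _), hzero, zero_add]

lemma mul_integral_neg_one_one_comp_add_mul (f : ℝ → ℝ) (t s : ℝ) :
    s * ∫ σ in (-1:ℝ)..1, f (t + s * σ) = ∫ x in (t - s)..(t + s), f x := by
  rw [← smul_eq_mul, smul_integral_comp_add_mul, mul_neg_one, mul_one, sub_eq_add_neg]

lemma integral_comp_add_abs_mul (f : ℝ → ℝ) (t r : ℝ) :
    ∫ σ in (-1:ℝ)..1, f (t + |r| * σ) = ∫ σ in (-1:ℝ)..1, f (t + r * σ) := by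
  rcases abs_choice r with h | h
  · rw [h]
  · rw [h]
    simpa [mul_neg, neg_mul] using integral_comp_neg (a := -1) (b := 1) (fun σ => f (t + r * σ))

lemma hasDerivAt_integral_sub_add {f : ℝ → ℝ} (hf : Continuous f) (t s : ℝ) :
    HasDerivAt (fun s => ∫ x in (t - s)..(t + s), f x) (f (t + s) + f (t - s)) s := by
  have hF : ∀ y, HasDerivAt (fun y => ∫ x in (0:ℝ)..y, f x) (f y) y :=
    fun y => (hf.integral_hasStrictDerivAt 0 y).hasDerivAt
  have h := ((hF (t + s)).comp s ((hasDerivAt_id s).const_add t)).sub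
    ((hF (t - s)).comp s ((hasDerivAt_id s).const_sub t))
  have hsplit : (fun s => ∫ x in (t - s)..(t + s), f x)
      = fun s => (∫ x in (0:ℝ)..(t + s), f x) - ∫ x in (0:ℝ)..(t - s), f x :=
    funext fun s => (integral_interval_sub_left (hf.intervalIntegrable _ _)
      (hf.intervalIntegrable _ _)).symm
  rw [hsplit]
  exact h.congr_deriv (by ring)

lemma abs_mul_le_of_abs_le_rpow {g : ℝ → ℝ} {ε κ : ℝ}
    (hg : ∀ x, |g x| ≤ ε * (1 + |x|) ^ (-(κ + 1))) (x : ℝ) :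
    |x * g x| ≤ ε * (1 + |x|) ^ (-κ) := by
  have hx : 0 < 1 + |x| := by positivity
  calc |x * g x| = |x| * |g x| := abs_mul _ _
    _ ≤ (1 + |x|) * (ε * (1 + |x|) ^ (-(κ + 1))) :=
        mul_le_mul (by linarith) (hg x) (abs_nonneg _) hx.le
    _ = ε * (1 + |x|) ^ (-κ) := by
        rw [show -κ = 1 + -(κ + 1) by ring, rpow_add hx, rpow_one]
        ring

lemma one_add_abs_rpow_neg_le_waveWeight {κ t r x : ℝ} (hκ : 1 ≤ κ) (ht : 0 ≤ t)
    (hx : |t - abs r| ≤ |x|) : (1 + |x|) ^ (-κ) ≤ 2 * (1 + |r|) * waveWeight κ t |r| := by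
  have hx0 : 0 < 1 + |x| := by positivity
  have hfar : (1 + |x|) ^ (-(1:ℝ)) ≤ 2 * (1 + |r|) * (1 + t + |r|) ^ (-(1:ℝ)) := by
    have h : 1 + t + |r| ≤ 2 * (1 + |r|) * (1 + |x|) := by
      have := le_abs_self (t - abs r)
      nlinarith [abs_nonneg r, abs_nonneg x]
    simpa using rpow_neg_le_mul_rpow_neg hx0 (by positivity) zero_le_one h
  have hnear : (1 + |x|) ^ (-(κ - 1)) ≤ (1 + |t - abs r|) ^ (-(κ - 1)) :=
    rpow_le_rpow_of_nonpos (by positivity) (by linarith) (by linarith)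
  calc (1 + |x|) ^ (-κ) = (1 + |x|) ^ (-(1:ℝ)) * (1 + |x|) ^ (-(κ - 1)) := by
        rw [← rpow_add hx0, show -(1:ℝ) + -(κ - 1) = -κ by ring]
    _ ≤ 2 * (1 + |r|) * (1 + t + |r|) ^ (-(1:ℝ)) * (1 + |t - abs r|) ^ (-(κ - 1)) := by
        gcongr
    _ = 2 * (1 + |r|) * waveWeight κ t |r| := by rw [waveWeight]; ring

section OddDecay

variable {H : ℝ → ℝ} {κ A : ℝ}

lemma decay_const_nonneg (hdecay : ∀ x, |H x| ≤ A * (1 + |x|) ^ (-κ)) : 0 ≤ A :=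
  nonneg_of_mul_nonneg_left ((abs_nonneg _).trans (hdecay 0)) (by positivity)

lemma abs_integral_comp_add_mul_le_of_two_mul_ge (hH : Continuous H) (hodd : ∀ x, H (-x) = -H x)
    (hdecay : ∀ x, |H x| ≤ A * (1 + |x|) ^ (-κ)) (hκ : 1 < κ) {t s : ℝ} (ht : 0 ≤ t)
    (hs : 1 + t ≤ 2 * s) :
    |∫ σ in (-1:ℝ)..1, H (t + s * σ)| ≤ 3 / (κ - 1) * A * waveWeight κ t s := by
  have hA := decay_const_nonneg hdecay
  have hs0 : 0 < s := by linarith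
  have habs : |t - s| ≤ t + s := abs_sub_le_iff.2 ⟨by linarith, by linarith⟩
  have htail : |∫ x in |t - s|..(t + s), H x| ≤ A * ((1 + |t - s|) ^ (-(κ - 1)) / (κ - 1)) :=
    calc |∫ x in |t - s|..(t + s), H x| ≤ ∫ x in |t - s|..(t + s), A * (1 + x) ^ (-κ) := by
          rw [← norm_eq_abs]
          refine norm_integral_le_of_norm_le habs (Filter.Eventually.of_forall fun x hx => ?_) ?_
          · simpa [abs_of_nonneg ((abs_nonneg _).trans hx.1.le)] using hdecay x
          · refine (ContinuousOn.rpow_const (by fun_prop) fun x hx => ?_).const_smul A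
              |>.intervalIntegrable
            rw [Set.uIcc_of_le habs] at hx
            exact Or.inl (by linarith [hx.1, abs_nonneg (t - s)])
      _ = A * ∫ x in |t - s|..(t + s), (1 + x) ^ (-κ) := integral_const_mul _ _
      _ ≤ _ := mul_le_mul_of_nonneg_left
          (integral_one_add_rpow_neg_le hκ (by linarith [abs_nonneg (t - s)]) habs) hA
  have hinv : s⁻¹ ≤ 3 * (1 + t + s) ^ (-(1:ℝ)) := by
    have h := rpow_neg_le_mul_rpow_neg hs0 (by linarith) zero_le_one
      (by linarith : 1 + t + s ≤ 3 * s)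
    rwa [rpow_neg_one s, rpow_one] at h
  have hu : ∫ σ in (-1:ℝ)..1, H (t + s * σ) = s⁻¹ * ∫ x in |t - s|..(t + s), H x := by
    rw [← integral_sub_add_eq_integral_abs_sub_of_odd hH hodd,
      ← mul_integral_neg_one_one_comp_add_mul, inv_mul_cancel_left₀ hs0.ne']
  rw [hu, abs_mul, abs_of_pos (inv_pos.2 hs0)]
  calc _ ≤ 3 * (1 + t + s) ^ (-(1:ℝ)) * (A * ((1 + |t - s|) ^ (-(κ - 1)) / (κ - 1))) :=
        mul_le_mul hinv htail (abs_nonneg _) (by positivity)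
    _ = _ := by rw [waveWeight]; ring

lemma abs_integral_comp_add_mul_le_of_two_mul_lt (hdecay : ∀ x, |H x| ≤ A * (1 + |x|) ^ (-κ))
    (hκ : 0 ≤ κ) {t s : ℝ} (ht : 0 ≤ t) (hs : 0 ≤ s) (hst : 2 * s < 1 + t) :
    |∫ σ in (-1:ℝ)..1, H (t + s * σ)| ≤ 6 * (3 / 2) ^ κ * A * waveWeight κ t s := by
  have hA := decay_const_nonneg hdecay
  have hpt : ∀ σ ∈ Set.uIoc (-1:ℝ) 1,
      ‖H (t + s * σ)‖ ≤ A * ((3 / 2) ^ κ * (1 + |t - s|) ^ (-κ)) := by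
    intro σ hσ
    rw [Set.uIoc_of_le (by norm_num)] at hσ
    have hnear : 1 + |t - s| ≤ 3 / 2 * (1 + |t + s * σ|) := by
      have : t - s ≤ t + s * σ := by nlinarith [hσ.1]
      rcases le_total s t with h | h
      · rw [abs_of_nonneg (by linarith : 0 ≤ t - s)]; linarith [le_abs_self (t + s * σ)]
      · rw [abs_of_nonpos (by linarith : t - s ≤ 0)]; linarith [abs_nonneg (t + s * σ)]
    exact (hdecay _).trans (mul_le_mul_of_nonneg_left
      (rpow_neg_le_mul_rpow_neg (by positivity) (by positivity) hκ hnear) hA)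
  have hfar : (1 + |t - s|) ^ (-(1:ℝ)) ≤ 3 * (1 + t + s) ^ (-(1:ℝ)) := by
    have h : 1 + t + s ≤ 3 * (1 + |t - s|) := by
      rcases le_total s t with h | h
      · rw [abs_of_nonneg (by linarith : 0 ≤ t - s)]; linarith
      · rw [abs_of_nonpos (by linarith : t - s ≤ 0)]; linarith
    simpa using rpow_neg_le_mul_rpow_neg (by positivity) (by positivity) zero_le_one h
  calc |∫ σ in (-1:ℝ)..1, H (t + s * σ)|
      ≤ A * ((3 / 2) ^ κ * (1 + |t - s|) ^ (-κ)) * |1 - (-1:ℝ)| :=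
        norm_integral_le_of_norm_le_const hpt
    _ = 2 * (3 / 2) ^ κ * A * ((1 + |t - s|) ^ (-(1:ℝ)) * (1 + |t - s|) ^ (-(κ - 1))) := by
        rw [← rpow_add (by positivity), show -(1:ℝ) + -(κ - 1) = -κ by ring,
          show |1 - (-1:ℝ)| = 2 by norm_num]
        ring
    _ ≤ 2 * (3 / 2) ^ κ * A * (3 * (1 + t + s) ^ (-(1:ℝ)) * (1 + |t - s|) ^ (-(κ - 1))) := by
        gcongr
    _ = _ := by rw [waveWeight]; ring

lemma abs_integral_comp_add_mul_le (hH : Continuous H) (hodd : ∀ x, H (-x) = -H x)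
    (hdecay : ∀ x, |H x| ≤ A * (1 + |x|) ^ (-κ)) (hκ : 1 < κ) {t : ℝ} (ht : 0 ≤ t) (r : ℝ) :
    |∫ σ in (-1:ℝ)..1, H (t + r * σ)|
      ≤ (3 / (κ - 1) + 6 * (3 / 2) ^ κ) * A * waveWeight κ t |r| := by
  have hA := decay_const_nonneg hdecay
  have hW := waveWeight_nonneg κ t |r| ht (abs_nonneg r)
  have hκ' : 0 < κ - 1 := by linarith
  rw [← integral_comp_add_abs_mul]
  rcases le_or_gt (1 + t) (2 * |r|) with h | h
  · refine (abs_integral_comp_add_mul_le_of_two_mul_ge hH hodd hdecay hκ ht h).trans ?_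
    gcongr
    exact le_add_of_nonneg_right (by positivity)
  · refine (abs_integral_comp_add_mul_le_of_two_mul_lt hdecay (by linarith) ht (abs_nonneg r)
      h).trans ?_
    gcongr
    exact le_add_of_nonneg_left (by positivity)

lemma abs_deriv_mul_integral_neg_one_one_comp_add_mul_le (hH : Continuous H)
    (hdecay : ∀ x, |H x| ≤ A * (1 + |x|) ^ (-κ)) (hκ : 1 ≤ κ) {t : ℝ} (ht : 0 ≤ t) (r : ℝ) :
    |deriv (fun s => s * ∫ σ in (-1:ℝ)..1, H (t + s * σ)) r|
      ≤ 4 * A * (1 + |r|) * waveWeight κ t |r| := by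
  have hA := decay_const_nonneg hdecay
  have hpt : ∀ x, |t - abs r| ≤ |x| → |H x| ≤ 2 * A * (1 + |r|) * waveWeight κ t |r| := by
    intro x hx
    calc |H x| ≤ A * (1 + |x|) ^ (-κ) := hdecay x
      _ ≤ A * (2 * (1 + |r|) * waveWeight κ t |r|) :=
          mul_le_mul_of_nonneg_left (one_add_abs_rpow_neg_le_waveWeight hκ ht hx) hA
      _ = _ := by ring
  have hplus : |t - abs r| ≤ |t + r| := by
    simpa [abs_of_nonneg ht] using abs_abs_sub_abs_le_abs_sub t (-r)
  have hminus : |t - abs r| ≤ |t - r| := by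
    simpa [abs_of_nonneg ht] using abs_abs_sub_abs_le_abs_sub t r
  simp_rw [mul_integral_neg_one_one_comp_add_mul]
  rw [(hasDerivAt_integral_sub_add hH t r).deriv]
  linarith [abs_add_le (H (t + r)) (H (t - r)), hpt _ hplus, hpt _ hminus]

end OddDecay

/-- Decay of the free radial 3D wave with data `(0, g)`: if `|g(r)| ≤ ε⟨r⟩^{-(κ+1)}` and
`|g'(r)| ≤ ε⟨r⟩^{-(κ+2)}` with `κ > 1`, then `u(t,r) = ∫_{-1}^1 H(t+rσ)dσ`, with
`H(ρ)=ρg(ρ)/2`, satisfies `|u| ≤ Cε⟨t+|r|⟩^{-1}⟨t-|r|⟩^{-(κ-1)}` and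
`|∂_r(ru)| ≤ Cε⟨r⟩⟨t+|r|⟩^{-1}⟨t-|r|⟩^{-(κ-1)}`. -/
theorem stmt12 (κ : ℝ) (hκ : 1 < κ) :
    ∃ C > (0:ℝ), ∀ ε > (0:ℝ), ∀ g : ℝ → ℝ, ContDiff ℝ 1 g → (∀ r, g (-r) = g r) →
      (∀ r : ℝ, |g r| ≤ ε * (1 + |r|) ^ (-(κ + 1))) →
      (∀ r : ℝ, |deriv g r| ≤ ε * (1 + |r|) ^ (-(κ + 2))) →
      ∀ t ≥ (0:ℝ), ∀ r : ℝ,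
        |∫ σ in (-1:ℝ)..1, (t + r * σ) * g (t + r * σ) / 2|
          ≤ C * ε * (1 + t + |r|) ^ (-(1:ℝ)) * (1 + |t - abs r|) ^ (-(κ - 1))
        ∧ |deriv (fun s => s * ∫ σ in (-1:ℝ)..1, (t + s * σ) * g (t + s * σ) / 2) r|
          ≤ C * ε * (1 + |r|) * (1 + t + |r|) ^ (-(1:ℝ)) * (1 + |t - abs r|) ^ (-(κ - 1)) := by
  set K := 3 / (κ - 1) + 6 * (3 / 2) ^ κ
  have hκ1 : 0 < κ - 1 := by linarith
  have hK : 0 < K := by positivity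
  refine ⟨(K + 4) / 2, by positivity, fun ε hε g hg hgeven hgdecay _ t ht r => ?_⟩
  have hH : Continuous fun x => x * g x / 2 := by have := hg.continuous; fun_prop
  have hodd : ∀ x, -x * g (-x) / 2 = -(x * g x / 2) := fun x => by rw [hgeven]; ring
  have hdecay : ∀ x, |x * g x / 2| ≤ ε / 2 * (1 + |x|) ^ (-κ) := fun x => by
    rw [abs_div, abs_two, div_mul_eq_mul_div, div_le_div_iff_of_pos_right two_pos]
    exact abs_mul_le_of_abs_le_rpow hgdecay x
  have hW := waveWeight_nonneg κ t |r| ht (abs_nonneg r)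
  constructor
  · calc _ ≤ K * (ε / 2) * waveWeight κ t |r| :=
          abs_integral_comp_add_mul_le hH hodd hdecay hκ ht r
      _ = K / 2 * ε * waveWeight κ t |r| := by ring
      _ ≤ (K + 4) / 2 * ε * waveWeight κ t |r| := by gcongr; linarith
      _ = _ := by rw [waveWeight]; ring
  · calc _ ≤ 4 * (ε / 2) * (1 + |r|) * waveWeight κ t |r| :=
          abs_deriv_mul_integral_neg_one_one_comp_add_mul_le hH hdecay hκ.le ht r
      _ = 2 * ε * (1 + |r|) * waveWeight κ t |r| := by ring
      _ ≤ (K + 4) / 2 * ε * (1 + |r|) * waveWeight κ t |r| := by gcongr; linarith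
      _ = _ := by rw [waveWeight]; ring
end

section
/- Let p > p₀(5) and κ in the admissible range as above. Define for t,r ≥ 0: I_{1,-}(t,r) = ∫_0^t ⟨s⟩^{-(p-1)} ⟨s+|t-s-r|⟩^{-p} ⟨s-|t-s-r|⟩^{-p(κ-1)} ⟨t-s-r⟩ ds. Then there is a constant C with I_{1,-}(t,r) ≤ C⟨t-r⟩^{-κ} if t ≥ 2r, and I_{1,-}(t,r) ≤ C⟨t-r⟩^{-(κ-1)} if t ≤ 2r. -/
open MeasureTheory

/-- The integral `I_{1,-}` from the nonlinear estimates. -/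
noncomputable def I1m (p κ t r : ℝ) : ℝ :=
  ∫ s in (0:ℝ)..t, (1 + |s|) ^ (-(p - 1)) * (1 + |s + abs (t - s - r)|) ^ (-p)
    * (1 + |s - abs (t - s - r)|) ^ (-(p * (κ - 1))) * (1 + |t - s - r|)

/-!
Write `m = t - r` and split the integral at `s = m`. For `s ≥ m` the integrand is at most
`⟨m⟩^{-p(κ-1)} ⟨s⟩^{-2(p-1)}`, integrable in `s` since `2(p-1) > 1`; this alone settles `m ≤ 0`.
For `0 ≤ s ≤ m` it is at most `⟨m⟩^{-(p-1)} ⟨s⟩^{-(p-1)} ⟨m-2s⟩^{-p(κ-1)}`, and at every such `s`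
one of `⟨s⟩`, `⟨m-2s⟩` is comparable to `⟨m⟩`; the remaining one-dimensional integrals grow at most
like a power of `⟨m⟩`, and the admissible range of `κ` makes all exponents add up to `-κ`. The
condition `p > p₀(5)` is needed at the endpoint `κ = 2(p-1)`, where it gives `p(κ-1) > 1`.
-/

open Real Set intervalIntegral

lemma continuous_one_add_abs_rpow (c : ℝ) : Continuous fun u : ℝ => (1 + |u|) ^ c :=
  (continuous_const.add continuous_abs).rpow_const fun x =>
    Or.inl (by positivity : (0:ℝ) < 1 + |x|).ne'

lemma one_add_rpow_mul_rpow_le {x e₁ e₂ e : ℝ} (hx : 0 ≤ x) (he : e₁ + e₂ ≤ e) :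
    (1 + x) ^ e₁ * (1 + x) ^ e₂ ≤ (1 + x) ^ e := by
  rw [← rpow_add (by linarith)]
  exact rpow_le_rpow_of_exponent_le (by linarith) he

lemma one_add_abs_rpow_neg_le_of_le_mul {c q m x : ℝ} (hc : 0 ≤ c) (hq : 1 ≤ q) (hm : 0 ≤ m)
    (hx : m ≤ q * |x|) : (1 + |x|) ^ (-c) ≤ q ^ c * (1 + m) ^ (-c) := by
  have hq0 : 0 < q := by linarith
  have h : (1 + m) / q ≤ 1 + |x| := by
    rw [div_le_iff₀ hq0]; nlinarith [abs_nonneg x]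
  calc (1 + |x|) ^ (-c) ≤ ((1 + m) / q) ^ (-c) :=
        rpow_le_rpow_of_nonpos (by positivity) h (by linarith)
    _ = q ^ c * (1 + m) ^ (-c) := by
        rw [div_rpow (by linarith) hq0.le, rpow_neg (by linarith), rpow_neg hq0.le]
        field_simp

lemma one_add_rpow_neg_mul_le {p x y z : ℝ} (hp : 1 ≤ p) (hz : 0 ≤ z) (hzx : z ≤ x)
    (hyx : y ≤ x) : (1 + x) ^ (-p) * (1 + y) ≤ (1 + z) ^ (-(p - 1)) := by
  have hx : 0 < 1 + x := by linarith
  calc (1 + x) ^ (-p) * (1 + y) ≤ (1 + x) ^ (-p) * (1 + x) := by gcongr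
    _ = (1 + x) ^ (-(p - 1)) := by rw [← rpow_add_one hx.ne']; ring_nf
    _ ≤ (1 + z) ^ (-(p - 1)) := rpow_le_rpow_of_nonpos (by linarith) (by linarith) (by linarith)

lemma integral_one_add_abs_rpow_neg_le_of_one_lt {c α β : ℝ} (hc : 1 < c) (hα : 0 ≤ α)
    (hαβ : α ≤ β) : ∫ u in α..β, (1 + |u|) ^ (-c) ≤ (1 + α) ^ (1 - c) / (c - 1) := by
  have hne : (0 : ℝ) ∉ uIcc (1 + α) (1 + β) := by
    rw [uIcc_of_le (by linarith)]; intro h; linarith [h.1]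
  calc ∫ u in α..β, (1 + |u|) ^ (-c) = ∫ u in α..β, (1 + u) ^ (-c) := by
        refine integral_congr fun u hu => ?_
        rw [uIcc_of_le hαβ] at hu
        simp only [abs_of_nonneg (hα.trans hu.1)]
    _ = ((1 + α) ^ (1 - c) - (1 + β) ^ (1 - c)) / (c - 1) := by
        rw [integral_comp_add_left (fun u => u ^ (-c)),
          integral_rpow (Or.inr ⟨by linarith, hne⟩)]
        rw [div_eq_div_iff (by linarith) (by linarith)]; ring_nf
    _ ≤ (1 + α) ^ (1 - c) / (c - 1) :=
        div_le_div_of_nonneg_right (sub_le_self _ (rpow_nonneg (by linarith) _)) (by linarith)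

lemma integral_one_add_abs_rpow_neg_le_of_pos {c e M : ℝ} (he : 0 < e) (hce : 1 - c ≤ e)
    (hM : 0 ≤ M) : ∫ u in (0:ℝ)..M, (1 + |u|) ^ (-c) ≤ (1 + M) ^ e / e := by
  calc ∫ u in (0:ℝ)..M, (1 + |u|) ^ (-c) ≤ ∫ u in (0:ℝ)..M, (1 + u) ^ (e - 1) := by
        refine integral_mono_on hM ((continuous_one_add_abs_rpow _).intervalIntegrable _ _)
          ?_ fun u hu => ?_
        · exact (ContinuousOn.rpow_const (by fun_prop) fun u hu => Or.inl (by
            rw [uIcc_of_le hM] at hu; linarith [hu.1])).intervalIntegrable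
        · rw [abs_of_nonneg hu.1]
          exact rpow_le_rpow_of_exponent_le (by linarith [hu.1]) (by linarith)
    _ = ((1 + M) ^ e - 1) / e := by
        rw [integral_comp_add_left (fun u => u ^ (e - 1)),
          integral_rpow (Or.inl (by linarith))]
        simp
    _ ≤ (1 + M) ^ e / e := by gcongr; linarith

lemma exists_integral_one_add_abs_rpow_neg_le {c e : ℝ} (he : 0 ≤ e) (hce : 1 - c ≤ e)
    (h : 0 < e ∨ 1 < c) :
    ∃ C ≥ 0, ∀ M ≥ 0, ∫ u in (0:ℝ)..M, (1 + |u|) ^ (-c) ≤ C * (1 + M) ^ e := by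
  rcases h with he | hc
  · refine ⟨e⁻¹, by positivity, fun M hM => ?_⟩
    rw [inv_mul_eq_div]
    exact integral_one_add_abs_rpow_neg_le_of_pos he hce hM
  · refine ⟨(c - 1)⁻¹, inv_nonneg.2 (by linarith), fun M hM => ?_⟩
    calc ∫ u in (0:ℝ)..M, (1 + |u|) ^ (-c) ≤ (1 + 0) ^ (1 - c) / (c - 1) :=
          integral_one_add_abs_rpow_neg_le_of_one_lt hc le_rfl hM
      _ ≤ (c - 1)⁻¹ * (1 + M) ^ e := by
          rw [add_zero, one_rpow, one_div]
          exact le_mul_of_one_le_right (inv_nonneg.2 (by linarith))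
            (one_le_rpow (by linarith) he)

lemma integral_comp_sub_two_mul_of_even {f : ℝ → ℝ} (hf : Continuous f)
    (heven : ∀ x, f (-x) = f x) (m : ℝ) :
    ∫ s in (0:ℝ)..m, f (m - 2 * s) = ∫ u in (0:ℝ)..m, f u := by
  have hneg : ∫ u in -m..0, f u = ∫ u in (0:ℝ)..m, f u := by
    simpa [heven] using (integral_comp_neg (a := 0) (b := m) f).symm
  rw [integral_comp_sub_mul f two_ne_zero, ← integral_add_adjacent_intervals
    (hf.intervalIntegrable _ 0) (hf.intervalIntegrable 0 _)]
  simp only [mul_zero, sub_zero, smul_eq_mul]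
  rw [show m - 2 * m = -m by ring, hneg]
  ring

lemma one_add_rpow_mul_rpow_mul_rpow_le {x e₁ e₂ e₃ e : ℝ} (hx : 0 ≤ x)
    (he : e₁ + e₂ + e₃ ≤ e) : (1 + x) ^ e₁ * (1 + x) ^ e₂ * (1 + x) ^ e₃ ≤ (1 + x) ^ e := by
  rw [← rpow_add (by linarith), ← rpow_add (by linarith)]
  exact rpow_le_rpow_of_exponent_le (by linarith) he

lemma one_add_abs_rpow_neg_mul_le_add {a b m s : ℝ} (ha : 0 ≤ a) (hb : 0 ≤ b) (hs : 0 ≤ s)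
    (hsm : s ≤ m) :
    (1 + |s|) ^ (-a) * (1 + |m - 2 * s|) ^ (-b)
      ≤ 2 ^ b * (1 + m) ^ (-b) * (1 + |s|) ^ (-a)
        + 4 ^ a * (1 + m) ^ (-a) * (1 + |m - 2 * s|) ^ (-b) := by
  have hm : 0 ≤ m := hs.trans hsm
  -- either `s` is far from `m / 2`, or `s ≥ m / 4`
  rcases le_or_gt m (2 * |m - 2 * s|) with hfar | hnear
  · have h := one_add_abs_rpow_neg_le_of_le_mul hb one_le_two hm hfar
    have : (1 + |s|) ^ (-a) * (1 + |m - 2 * s|) ^ (-b)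
        ≤ 2 ^ b * (1 + m) ^ (-b) * (1 + |s|) ^ (-a) := by
      rw [mul_comm]; gcongr
    exact le_add_of_le_of_nonneg this (by positivity)
  · have hs' : m ≤ 4 * |s| := by
      rw [abs_of_nonneg hs]; linarith [le_abs_self (m - 2 * s)]
    have h := one_add_abs_rpow_neg_le_of_le_mul ha (by norm_num) hm hs'
    have : (1 + |s|) ^ (-a) * (1 + |m - 2 * s|) ^ (-b)
        ≤ 4 ^ a * (1 + m) ^ (-a) * (1 + |m - 2 * s|) ^ (-b) := by gcongr
    exact le_add_of_nonneg_of_le (by positivity) this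

noncomputable def I1mIntegrand (p κ m s : ℝ) : ℝ :=
  (1 + |s|) ^ (-(p - 1)) * (1 + |s + abs (m - s)|) ^ (-p)
    * (1 + |s - abs (m - s)|) ^ (-(p * (κ - 1))) * (1 + |m - s|)

lemma I1m_eq_integral_I1mIntegrand (p κ t r : ℝ) :
    I1m p κ t r = ∫ s in (0:ℝ)..t, I1mIntegrand p κ (t - r) s := by
  simp only [I1m, I1mIntegrand, sub_right_comm t r]

lemma continuous_I1mIntegrand (p κ m : ℝ) : Continuous (I1mIntegrand p κ m) := by
  have hd : Continuous fun s : ℝ => |m - s| := (continuous_const.sub continuous_id).abs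
  exact (((continuous_one_add_abs_rpow _).mul ((continuous_one_add_abs_rpow _).comp
    (continuous_id.add hd))).mul ((continuous_one_add_abs_rpow _).comp
    (continuous_id.sub hd))).mul (continuous_const.add hd)

section Pointwise

variable {p κ m s : ℝ}

lemma I1mIntegrand_le_of_le (hp : 1 ≤ p) (hs : 0 ≤ s) (hms : m ≤ s) :
    I1mIntegrand p κ m s ≤ (1 + |m|) ^ (-(p * (κ - 1))) * (1 + |s|) ^ (-(2 * (p - 1))) := by
  have habs : |m - s| = s - m := by rw [abs_sub_comm, abs_of_nonneg (by linarith)]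
  have hdecay := one_add_rpow_neg_mul_le (p := p) hp hs (x := 2 * s - m) (y := s - m)
    (by linarith) (by linarith)
  rw [I1mIntegrand, habs, show s - (s - m) = m by ring, show s + (s - m) = 2 * s - m by ring,
    abs_of_nonneg (show 0 ≤ 2 * s - m by linarith), abs_of_nonneg hs]
  calc (1 + s) ^ (-(p - 1)) * (1 + (2 * s - m)) ^ (-p) * (1 + |m|) ^ (-(p * (κ - 1)))
        * (1 + (s - m))
      = (1 + |m|) ^ (-(p * (κ - 1)))
        * ((1 + s) ^ (-(p - 1)) * ((1 + (2 * s - m)) ^ (-p) * (1 + (s - m)))) := by ring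
    _ ≤ (1 + |m|) ^ (-(p * (κ - 1))) * ((1 + s) ^ (-(p - 1)) * (1 + s) ^ (-(p - 1))) := by
        gcongr
    _ = (1 + |m|) ^ (-(p * (κ - 1))) * (1 + s) ^ (-(2 * (p - 1))) := by
        rw [← rpow_add (by linarith)]; ring_nf

lemma I1mIntegrand_le_of_ge (hp : 1 ≤ p) (hs : 0 ≤ s) (hsm : s ≤ m) :
    I1mIntegrand p κ m s
      ≤ (1 + m) ^ (-(p - 1)) * ((1 + |s|) ^ (-(p - 1)) * (1 + |m - 2 * s|) ^ (-(p * (κ - 1)))) := by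
  have hm : 0 ≤ m := hs.trans hsm
  have hdecay := one_add_rpow_neg_mul_le (p := p) hp hm (x := m) (y := m - s) le_rfl
    (by linarith)
  rw [I1mIntegrand, abs_of_nonneg (show 0 ≤ m - s by linarith),
    show s + (m - s) = m by ring, show s - (m - s) = -(m - 2 * s) by ring, abs_neg,
    abs_of_nonneg hm]
  calc (1 + |s|) ^ (-(p - 1)) * (1 + m) ^ (-p) * (1 + |m - 2 * s|) ^ (-(p * (κ - 1)))
        * (1 + (m - s))
      = ((1 + m) ^ (-p) * (1 + (m - s)))
        * ((1 + |s|) ^ (-(p - 1)) * (1 + |m - 2 * s|) ^ (-(p * (κ - 1)))) := by ring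
    _ ≤ _ := by gcongr

end Pointwise

section Integrals

variable {p κ m : ℝ}

lemma integral_I1mIntegrand_le_of_le_left (hp : 3 / 2 < p) {α β : ℝ} (hα : 0 ≤ α)
    (hmα : m ≤ α) (hαβ : α ≤ β) :
    ∫ s in α..β, I1mIntegrand p κ m s
      ≤ (2 * (p - 1) - 1)⁻¹ * ((1 + |m|) ^ (-(p * (κ - 1))) * (1 + α) ^ (1 - 2 * (p - 1))) := by
  calc ∫ s in α..β, I1mIntegrand p κ m s
      ≤ ∫ s in α..β, (1 + |m|) ^ (-(p * (κ - 1))) * (1 + |s|) ^ (-(2 * (p - 1))) :=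
        integral_mono_on hαβ ((continuous_I1mIntegrand p κ m).intervalIntegrable _ _)
          ((continuous_const.mul (continuous_one_add_abs_rpow _)).intervalIntegrable _ _)
          fun s hs => I1mIntegrand_le_of_le (by linarith) (hα.trans hs.1) (hmα.trans hs.1)
    _ = (1 + |m|) ^ (-(p * (κ - 1))) * ∫ s in α..β, (1 + |s|) ^ (-(2 * (p - 1))) :=
        intervalIntegral.integral_const_mul _ _
    _ ≤ (1 + |m|) ^ (-(p * (κ - 1))) * ((1 + α) ^ (1 - 2 * (p - 1)) / (2 * (p - 1) - 1)) := by
        gcongr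
        exact integral_one_add_abs_rpow_neg_le_of_one_lt (by linarith) hα hαβ
    _ = _ := by ring

lemma integral_I1mIntegrand_le_of_nonneg (hp : 1 ≤ p) (hκ : 1 ≤ κ) (hm : 0 ≤ m) :
    ∫ s in (0:ℝ)..m, I1mIntegrand p κ m s
      ≤ (1 + m) ^ (-(p - 1))
        * (2 ^ (p * (κ - 1)) * (1 + m) ^ (-(p * (κ - 1)))
            * (∫ s in (0:ℝ)..m, (1 + |s|) ^ (-(p - 1)))
          + 4 ^ (p - 1) * (1 + m) ^ (-(p - 1))
            * ∫ s in (0:ℝ)..m, (1 + |s|) ^ (-(p * (κ - 1)))) := by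
  set a := p - 1
  set b := p * (κ - 1)
  have hb : 0 ≤ b := mul_nonneg (by linarith) (by linarith)
  have hA : Continuous fun s : ℝ => (1 + |s|) ^ (-a) := continuous_one_add_abs_rpow _
  have hB : Continuous fun s : ℝ => (1 + |m - 2 * s|) ^ (-b) :=
    (continuous_one_add_abs_rpow _).comp (continuous_const.sub (continuous_const_mul 2))
  calc ∫ s in (0:ℝ)..m, I1mIntegrand p κ m s
      ≤ ∫ s in (0:ℝ)..m, (1 + m) ^ (-a) * (2 ^ b * (1 + m) ^ (-b) * (1 + |s|) ^ (-a)
          + 4 ^ a * (1 + m) ^ (-a) * (1 + |m - 2 * s|) ^ (-b)) := by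
        refine integral_mono_on hm ((continuous_I1mIntegrand p κ m).intervalIntegrable _ _)
          ((((hA.const_mul _).add (hB.const_mul _)).const_mul _).intervalIntegrable _ _)
          fun s hs => ?_
        refine (I1mIntegrand_le_of_ge hp hs.1 hs.2).trans ?_
        gcongr
        exact one_add_abs_rpow_neg_mul_le_add (by linarith) hb hs.1 hs.2
    _ = (1 + m) ^ (-a) * (2 ^ b * (1 + m) ^ (-b) * (∫ s in (0:ℝ)..m, (1 + |s|) ^ (-a))
          + 4 ^ a * (1 + m) ^ (-a) * ∫ s in (0:ℝ)..m, (1 + |m - 2 * s|) ^ (-b)) := by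
        rw [intervalIntegral.integral_const_mul,
          integral_add ((hA.const_mul _).intervalIntegrable _ _)
            ((hB.const_mul _).intervalIntegrable _ _),
          intervalIntegral.integral_const_mul, intervalIntegral.integral_const_mul]
    _ = _ := by
        rw [integral_comp_sub_two_mul_of_even (continuous_one_add_abs_rpow _)
          fun x => by simp only [abs_neg]]

end Integrals

section Assembly

variable {p κ : ℝ}

lemma exists_integral_I1mIntegrand_le_of_nonneg (hp : 3 / 2 < p) (hκ : 1 < κ)
    (hκp : 3 - p ≤ κ * (p - 1)) (hκ2 : κ ≤ 2 * (p - 1))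
    (hb : κ < 2 * (p - 1) ∨ 1 < p * (κ - 1)) :
    ∃ C ≥ 0, ∀ m t, 0 ≤ m → m ≤ t →
      ∫ s in (0:ℝ)..t, I1mIntegrand p κ m s ≤ C * (1 + m) ^ (-κ) := by
  set a := p - 1
  set b := p * (κ - 1)
  -- the largest growth rates of `∫₀^m ⟨s⟩^{-a}`, `∫₀^m ⟨s⟩^{-b}` compatible with decay `⟨m⟩^{-κ}`
  obtain ⟨Ca, hCa, hA⟩ := exists_integral_one_add_abs_rpow_neg_le (c := a) (e := κ * a - 1)
    (by nlinarith) (by linarith) (Or.inl (by nlinarith))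
  obtain ⟨Cb, hCb, hB⟩ := exists_integral_one_add_abs_rpow_neg_le (c := b) (e := 2 * a - κ)
    (by linarith) (by nlinarith) (hb.imp_left fun h => by linarith)
  refine ⟨2 ^ b * Ca + 4 ^ a * Cb + (2 * a - 1)⁻¹,
    add_nonneg (by positivity) (inv_nonneg.2 (by linarith)), fun m t hm hmt => ?_⟩
  have hF := continuous_I1mIntegrand p κ m
  have hnear : ∫ s in (0:ℝ)..m, I1mIntegrand p κ m s ≤ (2 ^ b * Ca + 4 ^ a * Cb) * (1 + m) ^ (-κ) :=
    calc ∫ s in (0:ℝ)..m, I1mIntegrand p κ m s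
        ≤ (1 + m) ^ (-a) * (2 ^ b * (1 + m) ^ (-b) * (Ca * (1 + m) ^ (κ * a - 1))
            + 4 ^ a * (1 + m) ^ (-a) * (Cb * (1 + m) ^ (2 * a - κ))) := by
          refine (integral_I1mIntegrand_le_of_nonneg (by linarith) hκ.le hm).trans ?_
          gcongr
          exacts [hA m hm, hB m hm]
      _ = 2 ^ b * Ca * ((1 + m) ^ (-a) * (1 + m) ^ (-b) * (1 + m) ^ (κ * a - 1))
            + 4 ^ a * Cb * ((1 + m) ^ (-a) * (1 + m) ^ (-a) * (1 + m) ^ (2 * a - κ)) := by ring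
      _ ≤ 2 ^ b * Ca * (1 + m) ^ (-κ) + 4 ^ a * Cb * (1 + m) ^ (-κ) := by
          gcongr <;> exact one_add_rpow_mul_rpow_mul_rpow_le hm (by linarith)
      _ = _ := by ring
  have hfar : ∫ s in m..t, I1mIntegrand p κ m s ≤ (2 * a - 1)⁻¹ * (1 + m) ^ (-κ) := by
    refine (integral_I1mIntegrand_le_of_le_left hp hm le_rfl hmt).trans ?_
    rw [abs_of_nonneg hm]
    gcongr
    · exact inv_nonneg.2 (by linarith)
    · exact one_add_rpow_mul_rpow_le hm (by linarith)
  rw [← integral_add_adjacent_intervals (hF.intervalIntegrable 0 m) (hF.intervalIntegrable m t)]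
  linarith

lemma integral_I1mIntegrand_le_of_nonpos (hp : 3 / 2 < p) (hκ : 1 ≤ κ) {m t : ℝ} (hm : m ≤ 0)
    (ht : 0 ≤ t) :
    ∫ s in (0:ℝ)..t, I1mIntegrand p κ m s ≤ (2 * (p - 1) - 1)⁻¹ * (1 + |m|) ^ (-(κ - 1)) := by
  refine (integral_I1mIntegrand_le_of_le_left hp le_rfl hm ht).trans ?_
  rw [add_zero, one_rpow, mul_one]
  gcongr
  · exact inv_nonneg.2 (by linarith)
  · exact le_add_of_nonneg_right (abs_nonneg m)
  · nlinarith

end Assembly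

lemma exponent_conditions_of_admissible {p κ : ℝ} (hp : (3 + Real.sqrt 17) / 4 < p)
    (hκ1 : p < 2 → (3 - p) / (p - 1) ≤ κ ∧ κ ≤ 2 * (p - 1))
    (hκ2 : 2 ≤ p → 1 < κ ∧ κ ≤ 2 * (p - 1)) :
    3 / 2 < p ∧ 1 < κ ∧ 3 - p ≤ κ * (p - 1) ∧ κ ≤ 2 * (p - 1)
      ∧ (κ < 2 * (p - 1) ∨ 1 < p * (κ - 1)) := by
  have hsqrt : 4 < Real.sqrt 17 := by
    rw [show (4:ℝ) = Real.sqrt (4 ^ 2) by simp]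
    exact Real.sqrt_lt_sqrt (by norm_num) (by norm_num)
  have hquad : 1 < p * (2 * (p - 1) - 1) := by
    nlinarith [Real.sq_sqrt (show (0:ℝ) ≤ 17 by norm_num)]
  have hp1 : 0 < p - 1 := by linarith
  obtain ⟨hκ, hκp, hκ2⟩ : 1 < κ ∧ 3 - p ≤ κ * (p - 1) ∧ κ ≤ 2 * (p - 1) := by
    rcases lt_or_ge p 2 with hp2 | hp2
    · obtain ⟨h, h'⟩ := hκ1 hp2
      rw [div_le_iff₀ hp1] at h
      exact ⟨by nlinarith, by linarith, h'⟩
    · obtain ⟨h, h'⟩ := hκ2 hp2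
      exact ⟨h, by nlinarith, h'⟩
  refine ⟨by linarith, hκ, hκp, hκ2, ?_⟩
  rcases hκ2.lt_or_eq with h | h
  · exact Or.inl h
  · exact Or.inr (by rw [h]; exact hquad)

/-- Estimates for `I_{1,-}`: `I_{1,-}(t,r) ≲ ⟨t-r⟩^{-κ}` if `t ≥ 2r` and
`I_{1,-}(t,r) ≲ ⟨t-r⟩^{-(κ-1)}` if `t ≤ 2r`. -/
theorem stmt14 (p κ : ℝ) (hp : (3 + Real.sqrt 17) / 4 < p)
    (hκ1 : p < 2 → (3 - p) / (p - 1) ≤ κ ∧ κ ≤ 2 * (p - 1))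
    (hκ2 : 2 ≤ p → 1 < κ ∧ κ ≤ 2 * (p - 1)) :
    ∃ C > (0:ℝ), ∀ t ≥ (0:ℝ), ∀ r ≥ (0:ℝ),
      (2 * r ≤ t → I1m p κ t r ≤ C * (1 + |t - r|) ^ (-κ))
      ∧ (t ≤ 2 * r → I1m p κ t r ≤ C * (1 + |t - r|) ^ (-(κ - 1))) := by
  obtain ⟨hp', hκ, hκp, hκ2, hb⟩ := exponent_conditions_of_admissible hp hκ1 hκ2
  obtain ⟨C, hC, hnonneg⟩ := exists_integral_I1mIntegrand_le_of_nonneg hp' hκ hκp hκ2 hb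
  set D := (2 * (p - 1) - 1)⁻¹
  have hD : 0 < D := inv_pos.2 (by linarith)
  refine ⟨C + D, by positivity, fun t ht r hr => ?_⟩
  rw [I1m_eq_integral_I1mIntegrand]
  have hdecay : (1 + |t - r|) ^ (-κ) ≤ (1 + |t - r|) ^ (-(κ - 1)) :=
    rpow_le_rpow_of_exponent_le (le_add_of_nonneg_right (abs_nonneg _)) (by linarith)
  have hbound (hm : 0 ≤ t - r) :
      ∫ s in (0:ℝ)..t, I1mIntegrand p κ (t - r) s ≤ (C + D) * (1 + |t - r|) ^ (-κ) :=
    calc ∫ s in (0:ℝ)..t, I1mIntegrand p κ (t - r) s ≤ C * (1 + |t - r|) ^ (-κ) := by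
          rw [abs_of_nonneg hm]; exact hnonneg (t - r) t hm (by linarith)
      _ ≤ (C + D) * (1 + |t - r|) ^ (-κ) := by gcongr; linarith
  refine ⟨fun _ => hbound (by linarith), fun _ => ?_⟩
  rcases le_total 0 (t - r) with hm | hm
  · exact (hbound hm).trans (mul_le_mul_of_nonneg_left hdecay (by positivity))
  · calc ∫ s in (0:ℝ)..t, I1mIntegrand p κ (t - r) s ≤ D * (1 + |t - r|) ^ (-(κ - 1)) :=
          integral_I1mIntegrand_le_of_nonpos hp' hκ.le hm ht
      _ ≤ (C + D) * (1 + |t - r|) ^ (-(κ - 1)) := by gcongr; linarith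
end
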